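/- arXiv:2605.11873 — 9 statements merged into one kernel-verified Lean document; each statement's English description precedes it below -/
import Mathlib

section
/- In a temporal k-path graph 𝒢 = ⊎_{i∈[k]} P_i, for any two vertices u and v such that u reaches v, there exists a temporal path from u to v that uses at most one contiguous segment from each base-path: for every i ∈ [k], the temporal edges of the path that belong to P_i form a contiguous subpath of P_i and occur consecutively along the path. -/
/-
Let the walk start with the edge `e` of base-path `P i`, and let `f` be the last edge of the walk
lying on `P i`. Labels increase along the walk and along `P i`, so `f` does not precede `e` on
`P i`, and the stretch of `P i` from `e` to `f` is a single segment that can replace the prefix of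
the walk ending in `f`: the junction with the remaining suffix is unchanged. That suffix avoids
`P i`, so recursing on it produces segments from pairwise distinct base-paths.
-/

/-- A temporal edge of a directed temporal multigraph: a source, a destination,
and an integer time label. -/
structure TEdge (V : Type) where
  src : V
  dst : V
  lab : ℤ

/-- Two consecutive temporal edges form a valid step of a temporal path/walk:
the head of the first is the tail of the second, and labels strictly increase. -/
def TemporalStep {V : Type} (e f : TEdge V) : Prop :=
  e.dst = f.src ∧ e.lab < f.lab

/-- A temporal path: a sequence of temporal edges forming a directed path with
strictly increasing labels. -/
def IsTemporalPath {V : Type} (p : List (TEdge V)) : Prop :=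
  p.Chain' TemporalStep

/-- An annotated temporal walk in the temporal `k`-path graph `⊎ P`: each step
records the base-path its temporal edge comes from, edges form a directed walk
and labels strictly increase. -/
def IsAWalk {V : Type} {k : ℕ} (P : Fin k → List (TEdge V))
    (p : List (Fin k × TEdge V)) : Prop :=
  (∀ x ∈ p, x.2 ∈ P x.1) ∧ p.Chain' (fun x y => TemporalStep x.2 y.2)

/-- `u` reaches `v` in the temporal `k`-path graph `⊎ P`. -/
def Reaches {V : Type} {k : ℕ} (P : Fin k → List (TEdge V)) (u v : V) : Prop :=
  u = v ∨ ∃ p : List (Fin k × TEdge V), p ≠ [] ∧ IsAWalk P p ∧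
    (p.head?.map fun x => x.2.src) = some u ∧
    (p.getLast?.map fun x => x.2.dst) = some v

theorem List.exists_eq_append_cons_forall_not {α : Type*} {q : α → Prop} {l : List α}
    (h : ∃ a ∈ l, q a) : ∃ l₁ a l₂, l = l₁ ++ a :: l₂ ∧ q a ∧ ∀ b ∈ l₂, ¬ q b := by
  induction l with
  | nil => simp at h
  | cons x xs ih =>
    by_cases hxs : ∃ a ∈ xs, q a
    · obtain ⟨l₁, a, l₂, rfl, ha, hl₂⟩ := ih hxs
      exact ⟨x :: l₁, a, l₂, rfl, ha, hl₂⟩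
    · push Not at hxs
      obtain ⟨a, ha, hqa⟩ := h
      obtain rfl | ha := List.mem_cons.mp ha
      · exact ⟨[], a, xs, rfl, hqa, hxs⟩
      · exact absurd hqa (hxs a ha)

theorem IsTemporalPath.pairwise_lab_lt {V : Type} {l : List (TEdge V)} (hl : IsTemporalPath l) :
    l.Pairwise fun e f => e.lab < f.lab := by
  have : (l.map TEdge.lab).IsChain (· < ·) :=
    (List.isChain_map TEdge.lab).mpr (hl.imp fun _ _ h => h.2)
  exact List.pairwise_map.mp (List.isChain_iff_pairwise.mp this)

theorem IsTemporalPath.lab_le_of_mem_cons {V : Type} {e f : TEdge V} {l : List (TEdge V)}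
    (hl : IsTemporalPath (e :: l)) (hf : f ∈ e :: l) : e.lab ≤ f.lab := by
  rcases List.mem_cons.mp hf with rfl | hf
  · exact le_rfl
  · exact (List.rel_of_pairwise_cons hl.pairwise_lab_lt hf).le

theorem IsTemporalPath.exists_infix_head_getLast {V : Type} {l : List (TEdge V)}
    (hl : IsTemporalPath l) {e f : TEdge V} (he : e ∈ l) (hf : f ∈ l) (hef : e.lab ≤ f.lab) :
    ∃ s, s <:+: l ∧ s.head? = some e ∧ s.getLast? = some f := by
  obtain ⟨l₁, l₂, rfl⟩ := List.append_of_mem he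
  have hf' : f ∈ e :: l₂ := by
    refine (List.mem_append.mp hf).resolve_left fun hfl₁ => ?_
    have := (List.pairwise_append.mp hl.pairwise_lab_lt).2.2 f hfl₁ e List.mem_cons_self
    omega
  obtain ⟨m₁, m₂, hm⟩ := List.append_of_mem hf'
  refine ⟨m₁ ++ [f], ?_, ?_, by simp⟩
  · exact (List.IsPrefix.isInfix ⟨m₂, by simp [hm]⟩).trans (List.suffix_append l₁ _).isInfix
  · cases m₁ with
    | nil => simp [(List.cons_eq_cons.mp hm).1]
    | cons a m₁ => simp [(List.cons_eq_cons.mp hm).1]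

section Walks

variable {V : Type} {k : ℕ} {P : Fin k → List (TEdge V)}

def segmentWalk (L : List (Fin k × List (TEdge V))) : List (Fin k × TEdge V) :=
  (L.map fun x => x.2.map fun e => (x.1, e)).flatten

@[simp]
theorem segmentWalk_cons (i : Fin k) (s : List (TEdge V)) (L : List (Fin k × List (TEdge V))) :
    segmentWalk ((i, s) :: L) = s.map (fun e => (i, e)) ++ segmentWalk L := rfl

theorem isAWalk_nil : IsAWalk P [] := ⟨by simp, List.isChain_nil⟩

theorem isAWalk_append {p q : List (Fin k × TEdge V)} :
    IsAWalk P (p ++ q) ↔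
      IsAWalk P p ∧ IsAWalk P q ∧ ∀ x ∈ p.getLast?, ∀ y ∈ q.head?, TemporalStep x.2 y.2 := by
  have := List.isChain_append (R := fun x y : Fin k × TEdge V => TemporalStep x.2 y.2) (l₁ := p)
    (l₂ := q)
  simp only [IsAWalk, List.forall_mem_append]
  tauto

theorem isAWalk_map_of_isInfix {i : Fin k} {s : List (TEdge V)} (hP : IsTemporalPath (P i))
    (hs : s <:+: P i) : IsAWalk P (s.map fun e => (i, e)) :=
  ⟨by simpa using fun e he => hs.subset he, (List.isChain_map _).mpr (hP.infix hs)⟩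

theorem IsAWalk.isTemporalPath_map_snd {p : List (Fin k × TEdge V)} (hp : IsAWalk P p) :
    IsTemporalPath (p.map Prod.snd) :=
  (List.isChain_map _).mpr hp.2

theorem IsAWalk.exists_segmentWalk (hP : ∀ i, IsTemporalPath (P i))
    {p : List (Fin k × TEdge V)} (hp : IsAWalk P p) :
    ∃ L : List (Fin k × List (TEdge V)), (L.map Prod.fst).Nodup ∧ (∀ x ∈ L, x.2 <:+: P x.1) ∧
      L.map Prod.fst ⊆ p.map Prod.fst ∧ IsAWalk P (segmentWalk L) ∧
      (segmentWalk L).head? = p.head? ∧ (segmentWalk L).getLast? = p.getLast? := by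
  match p, hp with
  | [], _ => exact ⟨[], by simp, by simp, by simp, isAWalk_nil, rfl, rfl⟩
  | (i, e) :: t, hp =>
    obtain ⟨p₁, ⟨i', f⟩, p₂, hsplit, hi' : i' = i, hp₂⟩ :=
      List.exists_eq_append_cons_forall_not (l := (i, e) :: t) (q := fun x => x.1 = i)
        ⟨(i, e), List.mem_cons_self, rfl⟩
    subst i'
    have he : e ∈ P i := hp.1 _ List.mem_cons_self
    have hf_mem : (i, f) ∈ (i, e) :: t := by simp [hsplit]
    have hf : f ∈ P i := hp.1 _ hf_mem
    have hef : e.lab ≤ f.lab :=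
      hp.isTemporalPath_map_snd.lab_le_of_mem_cons (List.mem_map_of_mem (f := Prod.snd) hf_mem)
    obtain ⟨s, hs, hs_head, hs_last⟩ := (hP i).exists_infix_head_getLast he hf hef
    rw [show (i, e) :: t = (p₁ ++ [(i, f)]) ++ p₂ by simp [hsplit], isAWalk_append] at hp
    have hshorter : p₂.length < t.length + 1 := by
      have := congrArg List.length hsplit
      simp only [List.length_cons, List.length_append] at this
      omega
    obtain ⟨L, hL_nodup, hL_infix, hL_sub, hL_walk, hL_head, hL_last⟩ :=
      hp.2.1.exists_segmentWalk hP
    refine ⟨(i, s) :: L, ?_, List.forall_mem_cons.mpr ⟨hs, hL_infix⟩, ?_, ?_, ?_, ?_⟩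
    · refine List.nodup_cons.mpr ⟨fun hi_mem => ?_, hL_nodup⟩
      obtain ⟨x, hx, rfl⟩ := List.mem_map.mp (hL_sub hi_mem)
      exact hp₂ x hx rfl
    · refine List.cons_subset.mpr ⟨by simp, fun x hx => ?_⟩
      simp [hsplit, hL_sub hx]
    · rw [segmentWalk_cons, isAWalk_append]
      refine ⟨isAWalk_map_of_isInfix (hP i) hs, hL_walk, ?_⟩
      rw [hL_head]
      simpa [List.getLast?_map, hs_last] using hp.2.2
    · simp [List.head?_map, hs_head]
    · rw [hsplit]
      simp [List.getLast?_append, List.getLast?_cons, hL_last, hs_last]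
termination_by p.length

end Walks

/-- In a temporal `k`-path graph, whenever `u` reaches `v` there
is a temporal path (walk) from `u` to `v` that uses at most one contiguous
segment from each base-path: the walk decomposes as a concatenation of segments,
each an infix of its base-path, with pairwise distinct base-paths, so the edges
belonging to each base-path form a contiguous subpath of that base-path and occur
consecutively along the walk. -/
theorem stmt0 {V : Type} {k : ℕ} (P : Fin k → List (TEdge V))
    (hP : ∀ i, IsTemporalPath (P i)) (u v : V) (h : Reaches P u v) :
    ∃ p : List (Fin k × TEdge V),
      IsAWalk P p ∧
      (if p.isEmpty then u = v
        else (p.head?.map fun x => x.2.src) = some u ∧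
          (p.getLast?.map fun x => x.2.dst) = some v) ∧
      ∃ L : List (Fin k × List (TEdge V)),
        (L.map Prod.fst).Nodup ∧
        p = (L.map (fun x => x.2.map (fun e => (x.1, e)))).flatten ∧
        ∀ x ∈ L, x.2 <:+: P x.1 := by
  rcases h with rfl | ⟨p, hp_ne, hp, hu, hv⟩
  · exact ⟨[], isAWalk_nil, by simp, [], List.nodup_nil, rfl, by simp⟩
  obtain ⟨L, hL_nodup, hL_infix, -, hL_walk, hL_head, hL_last⟩ := hp.exists_segmentWalk hP
  have hL_ne : segmentWalk L ≠ [] := fun h => hp_ne (by simpa [h, eq_comm] using hL_head)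
  refine ⟨segmentWalk L, hL_walk, ?_, L, hL_nodup, rfl, hL_infix⟩
  rw [if_neg (by simpa using hL_ne), hL_head, hL_last]
  exact ⟨hu, hv⟩
end

section
/- Let 𝒢 = ⊎𝒫 be a temporal k-path graph with a vertex s and a base-path P_i ∈ 𝒫, and let Q and Q' be temporal paths in 𝒢 both starting at s such that the edge of Q leaving a vertex u is the temporal edge of P_i leaving u, the edge of Q' leaving a vertex v is the temporal edge of P_i leaving v, and u ≤_{P_i} v. Then the concatenation of the prefix of Q ending at u, the segment P_i[u:v], and the suffix of Q' starting at v is a sequence of temporal edges with strictly increasing labels forming a directed walk from s to the last vertex of Q'; in particular, s reaches the last vertex of Q'. -/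
/-!
The spliced sequence is a temporal walk because each of its three pieces is one: the prefix of
`Q` and the suffix of `Q'` are infixes of walks, and `P i [u:v]` is an infix of a temporal path.
The two junctions are steps already taken by `Q` (into `e`) and by `Q'` (out of `f`).
-/

namespace IsAWalk

variable {V : Type} {k : ℕ} {P : Fin k → List (TEdge V)}

theorem of_isInfix {p q : List (Fin k × TEdge V)} (hq : IsAWalk P q) (h : p <:+: q) :
    IsAWalk P p :=
  ⟨fun x hx => hq.1 x (h.subset hx), hq.2.infix h⟩

theorem append {p q : List (Fin k × TEdge V)} (hp : IsAWalk P p) (hq : IsAWalk P q)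
    (h : ∀ x ∈ p.getLast?, ∀ y ∈ q.head?, TemporalStep x.2 y.2) : IsAWalk P (p ++ q) := by
  refine ⟨fun x hx => ?_, List.isChain_append.2 ⟨hp.2, hq.2, h⟩⟩
  rcases List.mem_append.1 hx with hx | hx
  exacts [hp.1 x hx, hq.1 x hx]

theorem map_of_isInfix {i : Fin k} {S : List (TEdge V)} (hP : IsTemporalPath (P i))
    (hS : S <:+: P i) : IsAWalk P (S.map (Prod.mk i)) :=
  ⟨by simpa using fun e he => hS.subset he, (List.isChain_map _).2 (hP.infix hS)⟩

theorem splice {p r p' r' m : List (Fin k × TEdge V)} {x y : Fin k × TEdge V}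
    (hQ : IsAWalk P (p ++ x :: r)) (hm : IsAWalk P m) (hQ' : IsAWalk P (p' ++ y :: r'))
    (hx : m.head? = some x) (hy : m.getLast? = some y) : IsAWalk P (p ++ m ++ r') := by
  have hm_ne : m ≠ [] := by rintro rfl; simp at hx
  have hyr' : IsAWalk P (y :: r') := hQ'.of_isInfix (List.suffix_append _ _).isInfix
  refine ((hQ.of_isInfix (List.prefix_append _ _).isInfix).append hm ?_).append
    (hyr'.of_isInfix (List.suffix_cons y r').isInfix) ?_
  · intro a ha b hb
    rw [hx, Option.mem_some_iff] at hb
    exact (List.isChain_append.1 hQ.2).2.2 a ha b (by simp [hb])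
  · intro a ha b hb
    rw [List.getLast?_append_of_ne_nil _ hm_ne, hy, Option.mem_some_iff] at ha
    subst ha
    exact (List.isChain_cons.1 hyr'.2).1 b hb

end IsAWalk

theorem Reaches.of_isAWalk {V : Type} {k : ℕ} {P : Fin k → List (TEdge V)}
    {p : List (Fin k × TEdge V)} {u v : V} (hp : IsAWalk P p)
    (hu : (p.head?.map fun x => x.2.src) = some u)
    (hv : (p.getLast?.map fun x => x.2.dst) = some v) : Reaches P u v :=
  Or.inr ⟨p, by rintro rfl; simp at hu, hp, hu, hv⟩

theorem stmt1_general {V : Type} {k : ℕ} (P : Fin k → List (TEdge V))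
    (hP : ∀ i, IsTemporalPath (P i)) (i : Fin k) (s z : V)
    (Q q1 q2 Q' q1' q2' : List (Fin k × TEdge V)) (e f : TEdge V)
    (A S B : List (TEdge V))
    (hQ : IsAWalk P Q) (hQ' : IsAWalk P Q')
    (hQs : (Q.head?.map fun x => x.2.src) = some s)
    (hQdec : Q = q1 ++ (i, e) :: q2)
    (hQ'dec : Q' = q1' ++ (i, f) :: q2')
    (hPdec : P i = A ++ S ++ f :: B)
    (hseg : (S ++ [f]).head? = some e)
    (hz : (Q'.getLast?.map fun x => x.2.dst) = some z) :
    IsAWalk P (q1 ++ S.map (fun e' => (i, e')) ++ (i, f) :: q2') ∧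
    ((q1 ++ S.map (fun e' => (i, e')) ++ (i, f) :: q2').head?.map
      fun x => x.2.src) = some s ∧
    ((q1 ++ S.map (fun e' => (i, e')) ++ (i, f) :: q2').getLast?.map
      fun x => x.2.dst) = some z ∧
    Reaches P s z := by
  subst hQdec hQ'dec
  have hsegment : IsAWalk P ((S ++ [f]).map (Prod.mk i)) :=
    IsAWalk.map_of_isInfix (hP i) ⟨A, B, by simp [hPdec]⟩
  have hsplit : q1 ++ S.map (fun e' => (i, e')) ++ (i, f) :: q2' =
      q1 ++ (S ++ [f]).map (Prod.mk i) ++ q2' := by simp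
  have hhead : (q1 ++ S.map (fun e' => (i, e')) ++ (i, f) :: q2').head? =
      (q1 ++ (i, e) :: q2).head? := by
    rw [hsplit, List.append_assoc, List.head?_append, List.head?_append, List.head?_map, hseg,
      List.head?_append, List.head?_cons]
    rfl
  have hlast : (q1 ++ S.map (fun e' => (i, e')) ++ (i, f) :: q2').getLast? =
      (q1' ++ (i, f) :: q2').getLast? := by
    rw [List.getLast?_append_of_ne_nil _ (List.cons_ne_nil _ _),
      List.getLast?_append_of_ne_nil _ (List.cons_ne_nil _ _)]
  have hwalk := hsplit ▸ hQ.splice hsegment hQ' (by rw [List.head?_map, hseg]; rfl) (by simp)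
  rw [← hhead] at hQs
  rw [← hlast] at hz
  exact ⟨hwalk, hQs, hz, Reaches.of_isAWalk hwalk hQs hz⟩

/-- If two temporal paths `Q`, `Q'` of the `k`-path graph `⊎ P`
both start at `s`, `Q` leaves a vertex `u` along base-path `P i` with the edge
`e`, `Q'` leaves a vertex `v` along `P i` with the edge `f`, and `u ≤_{P i} v`
(witnessed by the decomposition `P i = A ++ S ++ f :: B` where the segment
`S ++ [f]` of `P i` from `u` starts with `e`), then the concatenation of the
prefix of `Q` ending at `u`, the segment `P i [u:v]`, and the suffix of `Q'`
starting at `v` is a temporal walk (strictly increasing labels, consecutive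
edges sharing endpoints) from `s` to the last vertex `z` of `Q'`; in particular
`s` reaches `z`. -/
theorem stmt1 {V : Type} {k : ℕ} (P : Fin k → List (TEdge V))
    (hP : ∀ i, IsTemporalPath (P i)) (i : Fin k) (s u v z : V)
    (Q q1 q2 Q' q1' q2' : List (Fin k × TEdge V)) (e f : TEdge V)
    (A S B : List (TEdge V))
    (hQ : IsAWalk P Q) (hQ' : IsAWalk P Q')
    (hQs : (Q.head?.map fun x => x.2.src) = some s)
    (hQ's : (Q'.head?.map fun x => x.2.src) = some s)
    (hQdec : Q = q1 ++ (i, e) :: q2)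
    (hQ'dec : Q' = q1' ++ (i, f) :: q2')
    (hu : e.src = u) (hv : f.src = v)
    (hPdec : P i = A ++ S ++ f :: B)
    (hseg : (S ++ [f]).head? = some e)
    (hz : (Q'.getLast?.map fun x => x.2.dst) = some z) :
    IsAWalk P (q1 ++ S.map (fun e' => (i, e')) ++ (i, f) :: q2') ∧
    ((q1 ++ S.map (fun e' => (i, e')) ++ (i, f) :: q2').head?.map
      fun x => x.2.src) = some s ∧
    ((q1 ++ S.map (fun e' => (i, e')) ++ (i, f) :: q2').getLast?.map
      fun x => x.2.dst) = some z ∧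
    Reaches P s z :=
  stmt1_general P hP i s z Q q1 q2 Q' q1' q2' e f A S B hQ hQ' hQs hQdec hQ'dec hPdec hseg hz
end

section
/- Let 𝒢 = ⊎𝒫 be a temporal k-path graph with source s on a distinguished base-path P_s, and let 𝒱 be a switch-vertex-set that is temporal in 𝒢 and whose tree T_𝒱 spans all of 𝒫. Then R^𝒢_𝒱(s) = ⋃_{P ∈ 𝒫} {vertices of the suffix P[switchonto(P):]}, where by convention switchonto(P_s) = s. -/
/-- The list of vertices visited by a list of temporal edges, in order. -/
def verts {V : Type} (p : List (TEdge V)) : List V :=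
  p.map TEdge.src ++ (p.getLast?.map TEdge.dst).toList

/-- `v` occurs on `p` at or before `w`. -/
def le_on {V : Type} (p : List (TEdge V)) (v w : V) : Prop :=
  ∃ m n : ℕ, m ≤ n ∧ (verts p)[m]? = some v ∧ (verts p)[n]? = some w

/-- `v` occurs on `p` strictly before `w`. -/
def lt_on {V : Type} (p : List (TEdge V)) (v w : V) : Prop :=
  ∃ m n : ℕ, m < n ∧ (verts p)[m]? = some v ∧ (verts p)[n]? = some w

/-- The edge relation of the switch tree `T_𝒱` on the base-path indices. -/
def svsEdge {V : Type} {k : ℕ} (𝒱 : Set (V × Fin k × Fin k)) (a b : Fin k) : Prop :=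
  ∃ v, (v, a, b) ∈ 𝒱

/-- A switch-vertex-set (SVS) for the `k`-path graph `⊎ P` with source base-path
index `sIdx`: a set of switches `(v, P_from, P_to)` such that (i) `P_from` has an
edge into `v` and `P_to` has an edge out of `v`; (ii) at most one switch onto each
base-path and none onto the source base-path; (iii) each switch off a base-path
occurs strictly after the switch onto it; (iv) the switches form a directed tree
rooted at the source base-path. -/
structure IsSVS {V : Type} {k : ℕ} (P : Fin k → List (TEdge V)) (sIdx : Fin k)
    (𝒱 : Set (V × Fin k × Fin k)) : Prop where
  switch_exists : ∀ ⦃v : V⦄ ⦃a b : Fin k⦄, (v, a, b) ∈ 𝒱 →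
    (∃ e ∈ P a, e.dst = v) ∧ ∃ e ∈ P b, e.src = v
  unique_onto : ∀ ⦃v v' : V⦄ ⦃a a' b : Fin k⦄,
    (v, a, b) ∈ 𝒱 → (v', a', b) ∈ 𝒱 → v = v' ∧ a = a'
  no_onto_source : ∀ ⦃v : V⦄ ⦃a : Fin k⦄, (v, a, sIdx) ∉ 𝒱
  onto_before_off : ∀ ⦃v : V⦄ ⦃a b : Fin k⦄, (v, a, b) ∈ 𝒱 →
    ∀ ⦃v' : V⦄ ⦃c : Fin k⦄, (v', b, c) ∈ 𝒱 → lt_on (P b) v v'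
  tree : ∀ ⦃v : V⦄ ⦃a b : Fin k⦄, (v, a, b) ∈ 𝒱 →
    Relation.ReflTransGen (svsEdge 𝒱) sIdx a

/-- The switch `(v, a, b)` is temporal in `⊎ P`: the edge of `P a` entering `v`
has a smaller label than the edge of `P b` leaving `v`. -/
def TemporalSwitch {V : Type} {k : ℕ} (P : Fin k → List (TEdge V))
    (v : V) (a b : Fin k) : Prop :=
  ∀ e ∈ P a, e.dst = v → ∀ f ∈ P b, f.src = v → e.lab < f.lab

/-- One step of a `𝒱`-respecting walk: if two consecutive edges come from
different base-paths, the corresponding switch belongs to `𝒱`. -/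
def RespStep {V : Type} {k : ℕ} (𝒱 : Set (V × Fin k × Fin k))
    (x y : Fin k × TEdge V) : Prop :=
  x.1 ≠ y.1 → (x.2.dst, x.1, y.1) ∈ 𝒱

/-- `u` reaches `v` in `⊎ P` by a `𝒱`-respecting temporal walk. -/
def ReachesResp {V : Type} {k : ℕ} (P : Fin k → List (TEdge V))
    (𝒱 : Set (V × Fin k × Fin k)) (u v : V) : Prop :=
  u = v ∨ ∃ p : List (Fin k × TEdge V), p ≠ [] ∧ IsAWalk P p ∧
    p.Chain' (RespStep 𝒱) ∧
    (p.head?.map fun x => x.2.src) = some u ∧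
    (p.getLast?.map fun x => x.2.dst) = some v


/-!
Along a `𝒱`-respecting temporal walk from `s`, the current vertex always lies on the suffix
`P[switchonto(P):]` of the base-path `P` of the current edge: moving along `P` stays in the
suffix, and the walk can only enter another base-path at its switch vertex.

Conversely, by induction along the tree `T_𝒱`, every edge of `P` leaving a vertex of that suffix
is the last edge of a `𝒱`-respecting temporal walk from `s`. For a switch `(v, P, P')`,
condition (iii) puts `v` after `switchonto(P)`, so the edge of `P` entering `v` is such an edge,
and since the switch is temporal the walk continues onto `P'`.
-/

section Verts

variable {V : Type} {p : List (TEdge V)}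

theorem verts_getElem?_of_lt {n : ℕ} (hn : n < p.length) : (verts p)[n]? = some p[n].src := by
  rw [verts, List.getElem?_append_left (by simpa)]
  simp [hn]

theorem verts_getElem?_succ (hp : IsTemporalPath p) {n : ℕ} (hn : n < p.length) :
    (verts p)[n + 1]? = some p[n].dst := by
  rcases Nat.lt_or_ge (n + 1) p.length with hn' | hn'
  · rw [verts_getElem?_of_lt hn', (List.isChain_iff_getElem.mp hp n hn').1]
  · have hlast : p.getLast? = some p[n] := by
      rw [List.getLast?_eq_getElem?, show p.length - 1 = n by omega, List.getElem?_eq_getElem hn]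
    rw [verts, List.getElem?_append_right (by simpa), hlast]
    simp [show n + 1 - p.length = 0 by omega]

theorem le_length_of_verts_getElem? {n : ℕ} {u : V} (h : (verts p)[n]? = some u) :
    n ≤ p.length := by
  have hlt := (List.getElem?_eq_some_iff.mp h).1
  have : (verts p).length ≤ p.length + 1 := by
    rcases hlast : p.getLast? <;> simp [verts, hlast]
  omega

theorem src_mem_verts {e : TEdge V} (he : e ∈ p) : e.src ∈ verts p :=
  List.mem_append_left _ (List.mem_map_of_mem he)

theorem eq_of_verts_getElem? (hnd : (verts p).Nodup) {m n : ℕ} {u : V}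
    (hm : (verts p)[m]? = some u) (hn : (verts p)[n]? = some u) : m = n :=
  (List.getElem?_inj (List.getElem?_eq_some_iff.mp hm).1 hnd).mp (hm.trans hn.symm)

theorem le_on_refl {u : V} (hu : u ∈ verts p) : le_on p u u :=
  let ⟨n, hn⟩ := List.mem_iff_getElem?.mp hu
  ⟨n, n, le_rfl, hn, hn⟩

theorem le_on_of_head? {s u : V} (hs : (verts p).head? = some s) (hu : u ∈ verts p) :
    le_on p s u :=
  let ⟨n, hn⟩ := List.mem_iff_getElem?.mp hu
  ⟨0, n, n.zero_le, by rwa [← List.head?_eq_getElem?], hn⟩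

theorem le_on_dst_of_le_on_src (hp : IsTemporalPath p) (hnd : (verts p).Nodup) {v : V}
    {e : TEdge V} (he : e ∈ p) (h : le_on p v e.src) : le_on p v e.dst := by
  obtain ⟨m, n, hmn, hm, hn⟩ := h
  obtain ⟨q, hq, rfl⟩ := List.getElem_of_mem he
  obtain rfl := eq_of_verts_getElem? hnd hn (verts_getElem?_of_lt hq)
  exact ⟨m, n + 1, by omega, hm, verts_getElem?_succ hp hq⟩

theorem le_on_src_of_lt_on_dst (hp : IsTemporalPath p) (hnd : (verts p).Nodup) {v : V}
    {e : TEdge V} (he : e ∈ p) (h : lt_on p v e.dst) : le_on p v e.src := by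
  obtain ⟨m, n, hmn, hm, hn⟩ := h
  obtain ⟨q, hq, rfl⟩ := List.getElem_of_mem he
  obtain rfl := eq_of_verts_getElem? hnd hn (verts_getElem?_succ hp hq)
  exact ⟨m, q, by omega, hm, verts_getElem?_of_lt hq⟩

end Verts

section RespectingWalks

def RespTraversable {V : Type} {k : ℕ} (P : Fin k → List (TEdge V))
    (𝒱 : Set (V × Fin k × Fin k)) (s : V) (x : Fin k × TEdge V) : Prop :=
  ∃ p : List (Fin k × TEdge V), IsAWalk P p ∧ p.IsChain (RespStep 𝒱) ∧
    (p.head?.map fun x => x.2.src) = some s ∧ p.getLast? = some x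

def IsRespEntry {V : Type} {k : ℕ} (P : Fin k → List (TEdge V))
    (𝒱 : Set (V × Fin k × Fin k)) (s : V) (c : Fin k) (v : V) : Prop :=
  ReachesResp P 𝒱 s v ∧ ∀ f ∈ P c, f.src = v → RespTraversable P 𝒱 s (c, f)

variable {V : Type} {k : ℕ} {P : Fin k → List (TEdge V)} {𝒱 : Set (V × Fin k × Fin k)} {s : V}

theorem RespTraversable.single {x : Fin k × TEdge V} (hx : x.2 ∈ P x.1) (hs : x.2.src = s) :
    RespTraversable P 𝒱 s x :=
  ⟨[x], ⟨by simpa, .singleton _⟩, .singleton _, by simp [hs], rfl⟩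

theorem RespTraversable.snoc {x y : Fin k × TEdge V} (h : RespTraversable P 𝒱 s x)
    (hy : y.2 ∈ P y.1) (hxy : TemporalStep x.2 y.2) (hr : RespStep 𝒱 x y) :
    RespTraversable P 𝒱 s y := by
  obtain ⟨p, ⟨hmem, hchain⟩, hresp, hhead, hlast⟩ := h
  have hne : p ≠ [] := by rintro rfl; simp at hlast
  refine ⟨p ++ [y], ⟨?_, hchain.append (.singleton _) ?_⟩, hresp.append (.singleton _) ?_,
    by rwa [List.head?_append_of_ne_nil _ hne], List.getLast?_concat⟩
  · simp only [List.mem_append, List.mem_singleton]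
    rintro z (hz | rfl)
    exacts [hmem z hz, hy]
  · simp [hlast, hxy]
  · simp [hlast, hr]

theorem RespTraversable.reachesResp {x : Fin k × TEdge V} (h : RespTraversable P 𝒱 s x) :
    ReachesResp P 𝒱 s x.2.dst :=
  let ⟨p, hw, hresp, hhead, hlast⟩ := h
  Or.inr ⟨p, by rintro rfl; simp at hlast, hw, hresp, hhead, by simp [hlast]⟩

theorem RespTraversable.of_le {i : Fin k} (hP : IsTemporalPath (P i)) {q r : ℕ} (hqr : q ≤ r)
    (hr : r < (P i).length) (h : RespTraversable P 𝒱 s (i, (P i)[q])) :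
    RespTraversable P 𝒱 s (i, (P i)[r]) := by
  induction r, hqr using Nat.le_induction with
  | base => exact h
  | succ r _ ih =>
    exact (ih (by omega) h).snoc (List.getElem_mem _) (List.isChain_iff_getElem.mp hP r hr)
      (fun hne => (hne rfl).elim)

theorem isRespEntry_self {c : Fin k} : IsRespEntry P 𝒱 s c s :=
  ⟨Or.inl rfl, fun _ hf hfs => .single hf hfs⟩

variable {c : Fin k} {v : V}

theorem IsRespEntry.respTraversable_of_le_on (hP : IsTemporalPath (P c))
    (hnd : (verts (P c)).Nodup) (h : IsRespEntry P 𝒱 s c v) {e : TEdge V} (he : e ∈ P c)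
    (hle : le_on (P c) v e.src) : RespTraversable P 𝒱 s (c, e) := by
  obtain ⟨m, n, hmn, hm, hn⟩ := hle
  obtain ⟨q, hq, rfl⟩ := List.getElem_of_mem he
  obtain rfl := eq_of_verts_getElem? hnd hn (verts_getElem?_of_lt hq)
  have hvm : (P c)[m].src = v :=
    Option.some_inj.mp ((verts_getElem?_of_lt (by omega)).symm.trans hm)
  exact .of_le hP hmn hq (h.2 _ (List.getElem_mem _) hvm)

theorem IsRespEntry.reachesResp_of_le_on (hP : IsTemporalPath (P c))
    (hnd : (verts (P c)).Nodup) (h : IsRespEntry P 𝒱 s c v) {w : V} (hle : le_on (P c) v w) :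
    ReachesResp P 𝒱 s w := by
  obtain ⟨m, n, hmn, hm, hn⟩ := hle
  rcases hmn.eq_or_lt with rfl | hlt
  · exact Option.some_inj.mp (hm.symm.trans hn) ▸ h.1
  obtain ⟨n, rfl⟩ : ∃ q, n = q + 1 := ⟨n - 1, by omega⟩
  have hq : n < (P c).length := le_length_of_verts_getElem? hn
  have hw : (P c)[n].dst = w := Option.some_inj.mp ((verts_getElem?_succ hP hq).symm.trans hn)
  have hle : le_on (P c) v (P c)[n].src := ⟨m, n, by omega, hm, verts_getElem?_of_lt hq⟩
  exact hw ▸ (h.respTraversable_of_le_on hP hnd (List.getElem_mem hq) hle).reachesResp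

theorem IsRespEntry.switch {a b : Fin k} {u : V} (hP : IsTemporalPath (P a))
    (hnd : (verts (P a)).Nodup) (h : IsRespEntry P 𝒱 s a u) (hsw : (v, a, b) ∈ 𝒱)
    (htmp : TemporalSwitch P v a b) {e : TEdge V} (he : e ∈ P a) (hev : e.dst = v)
    (hle : le_on (P a) u e.src) : IsRespEntry P 𝒱 s b v := by
  have hae : RespTraversable P 𝒱 s (a, e) := h.respTraversable_of_le_on hP hnd he hle
  refine ⟨hev ▸ hae.reachesResp, fun f hf hfv => hae.snoc hf ?_ fun _ => hev ▸ hsw⟩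
  exact ⟨hev.trans hfv.symm, htmp e he hev f hf hfv⟩

end RespectingWalks

section SwitchSuffixes

/-- `v = switchonto(P c)`, with the convention `switchonto(P sIdx) = s`. -/
def IsSwitchOnto {V : Type} {k : ℕ} (𝒱 : Set (V × Fin k × Fin k)) (sIdx : Fin k) (s : V)
    (c : Fin k) (v : V) : Prop :=
  (c = sIdx ∧ v = s) ∨ ∃ a, (v, a, c) ∈ 𝒱

def OnSwitchSuffix {V : Type} {k : ℕ} (P : Fin k → List (TEdge V))
    (𝒱 : Set (V × Fin k × Fin k)) (sIdx : Fin k) (s : V) (c : Fin k) (w : V) : Prop :=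
  ∃ v, IsSwitchOnto 𝒱 sIdx s c v ∧ le_on (P c) v w

variable {V : Type} {k : ℕ} {P : Fin k → List (TEdge V)} {𝒱 : Set (V × Fin k × Fin k)}
  {sIdx : Fin k} {s : V}

theorem exists_isSwitchOnto {c : Fin k} (hc : Relation.ReflTransGen (svsEdge 𝒱) sIdx c) :
    ∃ v, IsSwitchOnto 𝒱 sIdx s c v := by
  rcases hc.cases_tail with rfl | ⟨a, -, v, hv⟩
  exacts [⟨s, Or.inl ⟨rfl, rfl⟩⟩, ⟨v, Or.inr ⟨a, hv⟩⟩]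

theorem IsSwitchOnto.reflTransGen (hSVS : IsSVS P sIdx 𝒱) {c : Fin k} {v : V}
    (hv : IsSwitchOnto 𝒱 sIdx s c v) : Relation.ReflTransGen (svsEdge 𝒱) sIdx c := by
  rcases hv with ⟨rfl, -⟩ | ⟨a, hv⟩
  exacts [.refl, (hSVS.tree hv).tail ⟨v, hv⟩]

theorem IsSwitchOnto.exists_le_on_src {a b : Fin k} {u v : V} (hP : IsTemporalPath (P a))
    (hnd : (verts (P a)).Nodup) (hfirst : (verts (P sIdx)).head? = some s)
    (hSVS : IsSVS P sIdx 𝒱) (hu : IsSwitchOnto 𝒱 sIdx s a u) (hsw : (v, a, b) ∈ 𝒱) :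
    ∃ e ∈ P a, e.dst = v ∧ le_on (P a) u e.src := by
  obtain ⟨⟨e, he, rfl⟩, -⟩ := hSVS.switch_exists hsw
  refine ⟨e, he, rfl, ?_⟩
  rcases hu with ⟨rfl, rfl⟩ | ⟨c, hu⟩
  · exact le_on_of_head? hfirst (src_mem_verts he)
  · exact le_on_src_of_lt_on_dst hP hnd he (hSVS.onto_before_off hu hsw)

theorem isRespEntry_of_reflTransGen (hP : ∀ i, IsTemporalPath (P i))
    (hnd : ∀ i, (verts (P i)).Nodup) (hfirst : (verts (P sIdx)).head? = some s)
    (hSVS : IsSVS P sIdx 𝒱) (htmp : ∀ sw ∈ 𝒱, TemporalSwitch P sw.1 sw.2.1 sw.2.2) {c : Fin k}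
    (hc : Relation.ReflTransGen (svsEdge 𝒱) sIdx c) {v : V} (hv : IsSwitchOnto 𝒱 sIdx s c v) :
    IsRespEntry P 𝒱 s c v := by
  induction hc generalizing v with
  | refl =>
    rcases hv with ⟨-, rfl⟩ | ⟨a, hv⟩
    exacts [isRespEntry_self, (hSVS.no_onto_source hv).elim]
  | @tail a b hsa hab ih =>
    rcases hv with ⟨-, rfl⟩ | ⟨a', hv⟩
    · exact isRespEntry_self
    obtain ⟨v', hv'⟩ := hab
    obtain ⟨-, rfl⟩ := hSVS.unique_onto hv' hv
    obtain ⟨u, hu⟩ : ∃ u, IsSwitchOnto 𝒱 sIdx s a u := exists_isSwitchOnto hsa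
    obtain ⟨e, he, hev, hle⟩ := hu.exists_le_on_src (hP _) (hnd _) hfirst hSVS hv
    exact (ih hu).switch (hP _) (hnd _) hv (htmp _ hv) he hev hle

theorem OnSwitchSuffix.reachesResp (hP : ∀ i, IsTemporalPath (P i))
    (hnd : ∀ i, (verts (P i)).Nodup) (hfirst : (verts (P sIdx)).head? = some s)
    (hSVS : IsSVS P sIdx 𝒱) (htmp : ∀ sw ∈ 𝒱, TemporalSwitch P sw.1 sw.2.1 sw.2.2) {c : Fin k}
    {w : V} (h : OnSwitchSuffix P 𝒱 sIdx s c w) : ReachesResp P 𝒱 s w :=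
  let ⟨_, hv, hle⟩ := h
  have hentry := isRespEntry_of_reflTransGen hP hnd hfirst hSVS htmp (hv.reflTransGen hSVS) hv
  hentry.reachesResp_of_le_on (hP c) (hnd c) hle

theorem OnSwitchSuffix.dst {c : Fin k} (hP : IsTemporalPath (P c)) (hnd : (verts (P c)).Nodup)
    {e : TEdge V} (he : e ∈ P c) (h : OnSwitchSuffix P 𝒱 sIdx s c e.src) :
    OnSwitchSuffix P 𝒱 sIdx s c e.dst :=
  let ⟨v, hv, hle⟩ := h
  ⟨v, hv, le_on_dst_of_le_on_src hP hnd he hle⟩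

theorem OnSwitchSuffix.of_step {x y : Fin k × TEdge V} (hP : IsTemporalPath (P x.1))
    (hnd : (verts (P x.1)).Nodup) (hx : x.2 ∈ P x.1) (hy : y.2 ∈ P y.1)
    (hxy : TemporalStep x.2 y.2) (hr : RespStep 𝒱 x y) (h : OnSwitchSuffix P 𝒱 sIdx s x.1 x.2.src) :
    OnSwitchSuffix P 𝒱 sIdx s y.1 y.2.src := by
  rw [← hxy.1]
  by_cases hij : x.1 = y.1
  · exact hij ▸ h.dst hP hnd hx
  · exact ⟨_, Or.inr ⟨x.1, hr hij⟩, hxy.1 ▸ le_on_refl (src_mem_verts hy)⟩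

theorem exists_onSwitchSuffix_of_reachesResp (hP : ∀ i, IsTemporalPath (P i))
    (hnd : ∀ i, (verts (P i)).Nodup) (hfirst : (verts (P sIdx)).head? = some s)
    (honly : ∀ i, s ∈ verts (P i) → i = sIdx) {w : V} (h : ReachesResp P 𝒱 s w) :
    ∃ c, OnSwitchSuffix P 𝒱 sIdx s c w := by
  rcases h with rfl | ⟨p, hne, hw, hresp, hhead, hlast⟩
  · exact ⟨sIdx, _, Or.inl ⟨rfl, rfl⟩, le_on_refl (List.mem_of_mem_head? hfirst)⟩
  have hmem : ∀ n (hn : n < p.length), p[n].2 ∈ P p[n].1 := fun n hn => hw.1 _ (List.getElem_mem hn)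
  have hsuffix : ∀ n (hn : n < p.length), OnSwitchSuffix P 𝒱 sIdx s p[n].1 p[n].2.src := by
    intro n hn
    induction n with
    | zero =>
      have hs : p[0].2.src = s := by simpa [List.head?_eq_getElem?, hn] using hhead
      have hsrc := src_mem_verts (hmem 0 hn)
      exact ⟨s, Or.inl ⟨honly _ (hs ▸ hsrc), rfl⟩, hs ▸ le_on_refl hsrc⟩
    | succ n ih =>
      exact (ih (by omega)).of_step (hP _) (hnd _) (hmem n _) (hmem (n + 1) hn)
        (List.isChain_iff_getElem.mp hw.2 n hn) (List.isChain_iff_getElem.mp hresp n hn)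
  have hlen : p.length - 1 < p.length := by
    have := List.length_pos_iff.mpr hne
    omega
  simp only [List.getLast?_eq_getElem?, List.getElem?_eq_getElem hlen, Option.map_some,
    Option.some_inj] at hlast
  exact ⟨_, hlast ▸ (hsuffix _ hlen).dst (hP _) (hnd _) (hmem _ hlen)⟩

end SwitchSuffixes

theorem stmt2_general {V : Type} {k : ℕ} (P : Fin k → List (TEdge V))
    (hP : ∀ i, IsTemporalPath (P i)) (hnd : ∀ i, (verts (P i)).Nodup)
    (sIdx : Fin k) (s : V)
    (hfirst : (verts (P sIdx)).head? = some s)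
    (honly : ∀ i, s ∈ verts (P i) → i = sIdx)
    (𝒱 : Set (V × Fin k × Fin k)) (hSVS : IsSVS P sIdx 𝒱)
    (htmp : ∀ sw ∈ 𝒱, TemporalSwitch P sw.1 sw.2.1 sw.2.2) :
    {w | ReachesResp P 𝒱 s w} =
      {w | le_on (P sIdx) s w} ∪
        {w | ∃ v a b, (v, a, b) ∈ 𝒱 ∧ le_on (P b) v w} := by
  ext w
  constructor
  · intro hw
    obtain ⟨c, v, ⟨rfl, rfl⟩ | ⟨a, hv⟩, hle⟩ :=
      exists_onSwitchSuffix_of_reachesResp hP hnd hfirst honly hw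
    exacts [Or.inl hle, Or.inr ⟨v, a, c, hv, hle⟩]
  · rintro (hle | ⟨v, a, b, hv, hle⟩)
    · exact OnSwitchSuffix.reachesResp (c := sIdx) hP hnd hfirst hSVS htmp
        ⟨s, Or.inl ⟨rfl, rfl⟩, hle⟩
    · exact OnSwitchSuffix.reachesResp hP hnd hfirst hSVS htmp ⟨v, Or.inr ⟨a, hv⟩, hle⟩

/-- If `𝒱` is a switch-vertex-set that is temporal in the
temporal `k`-path graph `⊎ P`, whose tree spans all base-paths, and the source
`s` is the first vertex of its (unique) base-path `P sIdx`, then the set of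
vertices reachable from `s` by `𝒱`-respecting temporal walks is exactly the
union of the suffixes of the base-paths starting at their respective switch
vertices (with the convention `switchonto (P sIdx) = s`). -/
theorem stmt2 {V : Type} {k : ℕ} (P : Fin k → List (TEdge V))
    (hP : ∀ i, IsTemporalPath (P i)) (hnd : ∀ i, (verts (P i)).Nodup)
    (sIdx : Fin k) (s : V)
    (hfirst : (verts (P sIdx)).head? = some s)
    (honly : ∀ i, s ∈ verts (P i) → i = sIdx)
    (𝒱 : Set (V × Fin k × Fin k)) (hSVS : IsSVS P sIdx 𝒱)
    (htmp : ∀ sw ∈ 𝒱, TemporalSwitch P sw.1 sw.2.1 sw.2.2)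
    (hspan : ∀ i : Fin k, Relation.ReflTransGen (svsEdge 𝒱) sIdx i) :
    {w | ReachesResp P 𝒱 s w} =
      {w | le_on (P sIdx) s w} ∪
        {w | ∃ v a b, (v, a, b) ∈ 𝒱 ∧ le_on (P b) v w} :=
  stmt2_general P hP hnd sIdx s hfirst honly 𝒱 hSVS htmp
end

section
/- Let 𝒫 be a collection of k static directed paths and s a vertex on them; for a labeling λ assigning an integer label to each edge of each path such that labels are strictly increasing along each path, let R_λ(s) denote the set of vertices reachable from s in the temporal k-path graph (⊎𝒫, λ). Then the maximum of |R_λ(s)| over all such labelings λ equals the maximum of |R_λ(s)| over the restricted labelings in which, for each path P ∈ 𝒫, the labels along P are consecutive integers t_P, t_P + 1, t_P + 2, … determined by a start time t_P. -/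
/-- Turn a static path into a temporal path using a position-indexed labeling. -/
def mkTemporal {V : Type} (p : List (V × V)) (ℓ : ℕ → ℤ) : List (TEdge V) :=
  p.mapIdx fun n e => ⟨e.1, e.2, ℓ n⟩

/-! Fix a labeling `f` and let `first i` be the earliest position at which a temporal walk from
`s` boards path `i`. A walk reaching that edge arrives from a path `j` boarded strictly earlier,
i.e. with `f j (first j) < f i (first i)`. Relabel path `i` consecutively so that its edge
`first i` gets time `N * f i (first i)`, where `N` bounds all path lengths: then every edge of `j`
is labelled below the boarding edge of `i`. By well-founded induction on the boarding time each
path is boarded at the same position under the new labeling, so no reachable vertex is lost. -/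

variable {V : Type} {k : ℕ}

/-- `Boards P s i a`: some temporal walk in `⊎ P` from `s` ends with the edge at position `a`
of `P i`. -/
inductive Boards (P : Fin k → List (TEdge V)) (s : V) : Fin k → ℕ → Prop
  | start {i : Fin k} {a : ℕ} {t : TEdge V} : (P i)[a]? = some t → t.src = s → Boards P s i a
  | step {j i : Fin k} {b a : ℕ} {t t' : TEdge V} : Boards P s j b → (P j)[b]? = some t →
      (P i)[a]? = some t' → TemporalStep t t' → Boards P s i a

namespace Boards

variable {P : Fin k → List (TEdge V)} {s : V} {i : Fin k} {a : ℕ}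

theorem lt_length (h : Boards P s i a) : a < (P i).length := by
  cases h with
  | start ht => exact (List.getElem?_eq_some_iff.1 ht).1
  | step _ _ ht' => exact (List.getElem?_eq_some_iff.1 ht').1

theorem exists_walk {t : TEdge V} (h : Boards P s i a) (ht : (P i)[a]? = some t) :
    ∃ p, IsAWalk P p ∧ (p.head?.map fun x => x.2.src) = some s ∧ p.getLast? = some (i, t) := by
  induction h generalizing t with
  | @start i a u hu hsrc =>
    obtain rfl : u = t := Option.some_injective _ (hu.symm.trans ht)
    exact ⟨[(i, u)], ⟨by simpa using List.mem_of_getElem? hu, List.isChain_singleton _⟩,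
      by simp [hsrc], rfl⟩
  | @step j i b a u u' _ hu hu' hstep ih =>
    obtain rfl : u' = t := Option.some_injective _ (hu'.symm.trans ht)
    obtain ⟨p, ⟨hmem, hchain⟩, hhead, hlast⟩ := ih hu
    have hp : p ≠ [] := by rintro rfl; simp at hlast
    refine ⟨p ++ [(i, u')], ⟨?_, ?_⟩, by rwa [List.head?_append_of_ne_nil _ hp], by simp⟩
    · intro x hx
      rcases List.mem_append.1 hx with hx | hx
      · exact hmem x hx
      · obtain rfl := List.mem_singleton.1 hx
        exact List.mem_of_getElem? hu'
    · refine List.isChain_append.2 ⟨hchain, List.isChain_singleton _, ?_⟩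
      simp only [hlast, Option.mem_def, Option.some_inj, List.head?_cons]
      rintro _ rfl _ rfl
      exact hstep

theorem reaches {t : TEdge V} (h : Boards P s i a) (ht : (P i)[a]? = some t) :
    Reaches P s t.dst := by
  obtain ⟨p, hp, hhead, hlast⟩ := h.exists_walk ht
  exact Or.inr ⟨p, by rintro rfl; simp at hlast, hp, hhead, by rw [hlast]; rfl⟩

theorem getLast_of_isAWalk {x : Fin k × TEdge V} {p : List (Fin k × TEdge V)} {a : ℕ}
    (hp : IsAWalk P (x :: p)) (ha : (P x.1)[a]? = some x.2) (h : Boards P s x.1 a) :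
    ∀ y ∈ (x :: p).getLast?, ∃ b, (P y.1)[b]? = some y.2 ∧ Boards P s y.1 b := by
  induction p generalizing x a with
  | nil =>
    rintro y ⟨⟩
    exact ⟨a, ha, h⟩
  | cons z p ih =>
    obtain ⟨hmem, hchain⟩ := hp
    obtain ⟨hstep, hchain⟩ := List.isChain_cons_cons.1 hchain
    obtain ⟨b, hb⟩ := List.mem_iff_getElem?.1 (hmem z (by simp))
    rw [List.getLast?_cons_cons]
    exact ih ⟨fun y hy => hmem y (List.mem_cons_of_mem _ hy), hchain⟩ hb (step h ha hb hstep)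

end Boards

section Reachability

variable {P : Fin k → List (TEdge V)} {s : V}

theorem reaches_iff_exists_boards {w : V} :
    Reaches P s w ↔ s = w ∨ ∃ i a t, (P i)[a]? = some t ∧ Boards P s i a ∧ t.dst = w := by
  refine ⟨?_, ?_⟩
  · rintro (rfl | ⟨_ | ⟨x, p⟩, hne, hp, hhead, hlast⟩)
    · exact Or.inl rfl
    · exact absurd rfl hne
    obtain ⟨a, ha⟩ := List.mem_iff_getElem?.1 (hp.1 x (by simp))
    have hsrc : x.2.src = s := by simpa using hhead
    obtain ⟨y, hy, rfl⟩ := Option.map_eq_some_iff.1 hlast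
    obtain ⟨b, hb, hby⟩ := Boards.getLast_of_isAWalk hp ha (.start ha hsrc) y hy
    exact Or.inr ⟨y.1, b, y.2, hb, hby, rfl⟩
  · rintro (rfl | ⟨i, a, t, ht, h, rfl⟩)
    · exact Or.inl rfl
    · exact h.reaches ht

theorem finite_setOf_reaches : {w | Reaches P s w}.Finite := by
  refine ((Set.finite_iUnion fun i => (P i).finite_toSet.image TEdge.dst).insert s).subset ?_
  intro w hw
  rcases reaches_iff_exists_boards.1 hw with rfl | ⟨i, a, t, ht, -, rfl⟩
  · exact Set.mem_insert _ _
  · exact Set.mem_insert_of_mem _ (Set.mem_iUnion.2 ⟨i, t, List.mem_of_getElem? ht, rfl⟩)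

theorem Boards.of_le (hP : ∀ i, IsTemporalPath (P i)) {i : Fin k} {a b : ℕ}
    (h : Boards P s i a) (hab : a ≤ b) (hb : b < (P i).length) : Boards P s i b := by
  induction b, hab using Nat.le_induction with
  | base => exact h
  | succ b _ ih =>
    exact .step (ih (by omega)) (List.getElem?_eq_getElem _) (List.getElem?_eq_getElem hb)
      (List.isChain_iff_getElem.1 (hP i) b hb)

end Reachability

section PathGraph

variable {paths : Fin k → List (V × V)} {s : V}

/-- The temporal `k`-path graph `(⊎ paths, ℓ)`. -/
abbrev kPathGraph (paths : Fin k → List (V × V)) (ℓ : Fin k → ℕ → ℤ) :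
    Fin k → List (TEdge V) :=
  fun i => mkTemporal (paths i) (ℓ i)

@[simp]
theorem length_mkTemporal (p : List (V × V)) (ℓ : ℕ → ℤ) : (mkTemporal p ℓ).length = p.length :=
  List.length_mapIdx

theorem getElem?_mkTemporal_eq_some {p : List (V × V)} {ℓ : ℕ → ℤ} {a : ℕ} {t : TEdge V} :
    (mkTemporal p ℓ)[a]? = some t ↔ ∃ e, p[a]? = some e ∧ ⟨e.1, e.2, ℓ a⟩ = t := by
  simp [mkTemporal, List.getElem?_mapIdx]

theorem isTemporalPath_mkTemporal {p : List (V × V)} {ℓ : ℕ → ℤ}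
    (hp : p.IsChain fun e f => e.2 = f.1) (hℓ : ∀ n, n + 1 < p.length → ℓ n < ℓ (n + 1)) :
    IsTemporalPath (mkTemporal p ℓ) := by
  refine List.isChain_iff_getElem.2 fun n hn => ?_
  simp only [length_mkTemporal] at hn
  simp only [mkTemporal, List.getElem_mapIdx]
  exact ⟨List.isChain_iff_getElem.1 hp n hn, hℓ n hn⟩

theorem isTemporalPath_mkTemporal_consecutive {p : List (V × V)}
    (hp : p.IsChain fun e f => e.2 = f.1) (t : ℤ) : IsTemporalPath (mkTemporal p fun n => t + n) :=
  isTemporalPath_mkTemporal hp fun n _ => by omega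

theorem setOf_reaches_subset_of_boards {f g : Fin k → ℕ → ℤ}
    (h : ∀ i a, Boards (kPathGraph paths f) s i a → Boards (kPathGraph paths g) s i a) :
    {w | Reaches (kPathGraph paths f) s w} ⊆ {w | Reaches (kPathGraph paths g) s w} := by
  intro w hw
  rcases reaches_iff_exists_boards.1 hw with rfl | ⟨i, a, t, ht, hb, rfl⟩
  · exact Or.inl rfl
  · obtain ⟨e, he, rfl⟩ := getElem?_mkTemporal_eq_some.1 ht
    exact (h i a hb).reaches (t := ⟨e.1, e.2, g i a⟩) (getElem?_mkTemporal_eq_some.2 ⟨e, he, rfl⟩)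

/-- Junk value `0` when `s` never boards `P i`. -/
noncomputable def firstBoard (P : Fin k → List (TEdge V)) (s : V) (i : Fin k) : ℕ :=
  sInf {a | Boards P s i a}

theorem Boards.firstBoard_le {P : Fin k → List (TEdge V)} {i : Fin k} {a : ℕ}
    (h : Boards P s i a) : firstBoard P s i ≤ a :=
  Nat.sInf_le h

theorem Boards.boards_firstBoard {P : Fin k → List (TEdge V)} {i : Fin k} {a : ℕ}
    (h : Boards P s i a) : Boards P s i (firstBoard P s i) :=
  Nat.sInf_mem ⟨a, h⟩

variable {f : Fin k → ℕ → ℤ} {N : ℤ}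

/-- Start times that give the first boarding edge of path `i` the label `N * f i (first i)`. -/
noncomputable abbrev boardingRelabel (paths : Fin k → List (V × V)) (s : V)
    (f : Fin k → ℕ → ℤ) (N : ℤ) : Fin k → ℤ :=
  fun i => N * f i (firstBoard (kPathGraph paths f) s i) - firstBoard (kPathGraph paths f) s i

theorem Boards.boardingRelabel_firstBoard
    (hpaths : ∀ i, (paths i).IsChain fun e f => e.2 = f.1)
    (hf : ∀ i n, n + 1 < (paths i).length → f i n < f i (n + 1))
    (hN : ∀ j, ((paths j).length : ℤ) ≤ N) {i : Fin k} {a : ℕ}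
    (h : Boards (kPathGraph paths f) s i a) :
    Boards (kPathGraph paths fun j n => boardingRelabel paths s f N j + n) s i
      (firstBoard (kPathGraph paths f) s i) := by
  set first := firstBoard (kPathGraph paths f) s
  have hmono : ∀ j {b c}, b ≤ c → c < (paths j).length → f j b ≤ f j c := fun j b c hbc hc =>
    (strictMonoOn_of_lt_add_one Set.ordConnected_Iio fun n _ _ hn => hf j n hn).monotoneOn
      (Set.mem_Iio.2 (by omega)) hc hbc
  induction i using (Finite.wellFounded_of_trans_of_irrefl
    (InvImage (· < ·) fun i => f i (first i))).induction generalizing a with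
  | _ i ih =>
  rcases h.boards_firstBoard with ⟨ht, hsrc⟩ | @⟨j, _, b, _, _, _, hb, ht, ht', hstep⟩
  · obtain ⟨e, he, rfl⟩ := getElem?_mkTemporal_eq_some.1 ht
    exact .start (getElem?_mkTemporal_eq_some.2 ⟨e, he, rfl⟩) hsrc
  · obtain ⟨e, he, rfl⟩ := getElem?_mkTemporal_eq_some.1 ht
    obtain ⟨e', he', rfl⟩ := getElem?_mkTemporal_eq_some.1 ht'
    have hb_len : b < (paths j).length := by simpa using hb.lt_length
    have hlt : f j (first j) < f i (first i) :=
      (hmono j hb.firstBoard_le hb_len).trans_lt hstep.2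
    refine .step ((ih j hlt hb).of_le (fun j => isTemporalPath_mkTemporal_consecutive (hpaths j) _)
      hb.firstBoard_le (by simpa using hb_len))
      (getElem?_mkTemporal_eq_some.2 ⟨e, he, rfl⟩)
      (getElem?_mkTemporal_eq_some.2 ⟨e', he', rfl⟩) ⟨hstep.1, ?_⟩
    -- the edges of path `j` carry labels below `N * (f j (first j) + 1)`
    show N * f j (first j) - first j + (b : ℤ) < N * f i (first i) - first i + first i
    have hbN := hN j
    have : N * (f j (first j) + 1) ≤ N * f i (first i) :=
      mul_le_mul_of_nonneg_left hlt (by omega)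
    linarith

theorem exists_consecutive_boards (hpaths : ∀ i, (paths i).IsChain fun e f => e.2 = f.1)
    (hf : ∀ i n, n + 1 < (paths i).length → f i n < f i (n + 1)) :
    ∃ t : Fin k → ℤ, ∀ i a, Boards (kPathGraph paths f) s i a →
      Boards (kPathGraph paths fun i n => t i + n) s i a := by
  have hN : ∀ j, ((paths j).length : ℤ) ≤ ∑ i, ((paths i).length : ℤ) := fun j =>
    Finset.single_le_sum (f := fun i => ((paths i).length : ℤ)) (fun _ _ => by positivity)
      (Finset.mem_univ j)
  refine ⟨boardingRelabel paths s f (∑ i, ((paths i).length : ℤ)), fun i a h => ?_⟩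
  exact (h.boardingRelabel_firstBoard hpaths hf hN).of_le
    (fun j => isTemporalPath_mkTemporal_consecutive (hpaths j) _) h.firstBoard_le
    (by simpa using h.lt_length)

end PathGraph

theorem stmt8_general {V : Type} {k : ℕ} (paths : Fin k → List (V × V))
    (hpaths : ∀ i, (paths i).Chain' (fun e f => e.2 = f.1)) (s : V) :
    sSup {m : ℕ | ∃ ℓ : Fin k → ℕ → ℤ,
        (∀ i n, n + 1 < (paths i).length → ℓ i n < ℓ i (n + 1)) ∧
        m = {w | Reaches (fun i => mkTemporal (paths i) (ℓ i)) s w}.ncard} =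
    sSup {m : ℕ | ∃ t : Fin k → ℤ,
        m = {w | Reaches (fun i => mkTemporal (paths i) (fun n => t i + n)) s w}.ncard} := by
  apply csSup_eq_csSup_of_forall_exists_le
  · rintro _ ⟨f, hf, rfl⟩
    obtain ⟨t, ht⟩ := exists_consecutive_boards (s := s) hpaths hf
    exact ⟨_, ⟨t, rfl⟩,
      Set.ncard_le_ncard (setOf_reaches_subset_of_boards ht) finite_setOf_reaches⟩
  · rintro _ ⟨t, rfl⟩
    exact ⟨_, ⟨fun i n => t i + n, fun i n _ => by dsimp only; omega, rfl⟩, le_rfl⟩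

/-- For a collection of `k` static directed paths and a vertex
`s`, the maximum over all labelings that are strictly increasing along each path
of the number of vertices reachable from `s` equals the maximum over the
restricted labelings in which the labels along each path `P` are the consecutive
integers `t_P, t_P + 1, t_P + 2, …` determined by a start time `t_P`. -/
theorem stmt8 {V : Type} [Fintype V] {k : ℕ} (paths : Fin k → List (V × V))
    (hpaths : ∀ i, (paths i).Chain' (fun e f => e.2 = f.1)) (s : V) :
    sSup {m : ℕ | ∃ ℓ : Fin k → ℕ → ℤ,
        (∀ i n, n + 1 < (paths i).length → ℓ i n < ℓ i (n + 1)) ∧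
        m = {w | Reaches (fun i => mkTemporal (paths i) (ℓ i)) s w}.ncard} =
    sSup {m : ℕ | ∃ t : Fin k → ℤ,
        m = {w | Reaches (fun i => mkTemporal (paths i) (fun n => t i + n)) s w}.ncard} :=
  stmt8_general paths hpaths s
end

section
/- Let 𝒫 be a collection of k static directed paths with a vertex s on a distinguished path P_s, and let 𝒱 be a set of switches satisfying the label-free switch-vertex-set conditions (i)–(iv). Then there exists a labeling λ of the edges of the paths, strictly increasing along each path, such that every switch of 𝒱 is temporal in the temporal k-path graph (⊎𝒫, λ). -/
/-- The list of vertices visited by a static directed path (list of arcs). -/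
def staticVerts {V : Type} (p : List (V × V)) : List V :=
  p.map Prod.fst ++ (p.getLast?.map Prod.snd).toList

/-- `v` occurs on the static path `p` at or before `w`. -/
def le_onStatic {V : Type} (p : List (V × V)) (v w : V) : Prop :=
  ∃ m n : ℕ, m ≤ n ∧ (staticVerts p)[m]? = some v ∧ (staticVerts p)[n]? = some w

/-- `v` occurs on the static path `p` strictly before `w`. -/
def lt_onStatic {V : Type} (p : List (V × V)) (v w : V) : Prop :=
  ∃ m n : ℕ, m < n ∧ (staticVerts p)[m]? = some v ∧ (staticVerts p)[n]? = some w

/-- The edge relation of the switch tree `T_𝒱` on the path indices. -/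
def svsEdgeS {V : Type} {k : ℕ} (𝒱 : Set (V × Fin k × Fin k)) (a b : Fin k) : Prop :=
  ∃ v, (v, a, b) ∈ 𝒱

/-- The label-free switch-vertex-set conditions (i)–(iv) for a collection of
static directed paths with source path index `sIdx`. -/
structure IsStaticSVS {V : Type} {k : ℕ} (paths : Fin k → List (V × V)) (sIdx : Fin k)
    (𝒱 : Set (V × Fin k × Fin k)) : Prop where
  switch_exists : ∀ ⦃v : V⦄ ⦃a b : Fin k⦄, (v, a, b) ∈ 𝒱 →
    (∃ e ∈ paths a, e.2 = v) ∧ ∃ e ∈ paths b, e.1 = v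
  unique_onto : ∀ ⦃v v' : V⦄ ⦃a a' b : Fin k⦄,
    (v, a, b) ∈ 𝒱 → (v', a', b) ∈ 𝒱 → v = v' ∧ a = a'
  no_onto_source : ∀ ⦃v : V⦄ ⦃a : Fin k⦄, (v, a, sIdx) ∉ 𝒱
  onto_before_off : ∀ ⦃v : V⦄ ⦃a b : Fin k⦄, (v, a, b) ∈ 𝒱 →
    ∀ ⦃v' : V⦄ ⦃c : Fin k⦄, (v', b, c) ∈ 𝒱 → lt_onStatic (paths b) v v'
  tree : ∀ ⦃v : V⦄ ⦃a b : Fin k⦄, (v, a, b) ∈ 𝒱 →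
    Relation.ReflTransGen (svsEdgeS 𝒱) sIdx a

/-!
Each switch `(v, a, b)` makes `b` a child of `a` in the switch tree, so it suffices to give
the `n`-th edge of path `i` the label `L * d i + n`, where `L` bounds all path lengths and
`d` strictly increases along tree edges. The number of ancestors is such a `d`: a parent's
ancestors are ancestors of the child, and the child is not an ancestor of its parent, since
an in-tree with no edge into the root has no cycle through a node reachable from the root.
-/

open Relation

section RootedInTree

variable {α : Type*}

theorem Relation.not_transGen_self_of_reflTransGen {r : α → α → Prop} {root : α}
    (h_root : ∀ a, ¬ r a root) (h_unique : ∀ ⦃a a' b⦄, r a b → r a' b → a = a')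
    {x : α} (hx : ReflTransGen r root x) : ¬ TransGen r x x := by
  induction hx with
  | refl =>
    intro h
    obtain ⟨a, -, ha⟩ := TransGen.tail'_iff.mp h
    exact h_root a ha
  | @tail y x _ hyx ih =>
    intro h
    obtain ⟨z, hxz, hzx⟩ := TransGen.tail'_iff.mp h
    obtain rfl := h_unique hzx hyx
    exact ih (TransGen.head' hyx hxz)

noncomputable def ancestorCount (r : α → α → Prop) (x : α) : ℕ :=
  {y | ReflTransGen r y x}.ncard

theorem ancestorCount_lt_of_rel [Finite α] {r : α → α → Prop} {a b : α} (hab : r a b)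
    (hb : ¬ TransGen r b b) : ancestorCount r a < ancestorCount r b := by
  refine Set.ncard_lt_ncard (Set.ssubset_iff_of_subset (fun y hy => hy.tail hab) |>.mpr ?_)
  exact ⟨b, ReflTransGen.refl, fun hba => hb (TransGen.tail' hba hab)⟩

end RootedInTree

theorem IsStaticSVS.not_transGen_self {V : Type} {k : ℕ} {paths : Fin k → List (V × V)}
    {sIdx : Fin k} {𝒱 : Set (V × Fin k × Fin k)} (hSVS : IsStaticSVS paths sIdx 𝒱)
    {v : V} {a b : Fin k} (hv : (v, a, b) ∈ 𝒱) : ¬ TransGen (svsEdgeS 𝒱) b b :=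
  Relation.not_transGen_self_of_reflTransGen (fun _ ⟨_, h⟩ => hSVS.no_onto_source h)
    (fun _ _ _ ⟨_, h⟩ ⟨_, h'⟩ => (hSVS.unique_onto h h').2)
    ((hSVS.tree hv).tail ⟨v, hv⟩)

theorem Nat.mul_add_lt_mul_add {L d d' n m : ℕ} (hn : n < L) (hd : d < d') :
    L * d + n < L * d' + m :=
  calc L * d + n < L * (d + 1) := by rw [Nat.mul_succ]; omega
    _ ≤ L * d' + m := (Nat.mul_le_mul_left L hd).trans (Nat.le_add_right _ _)

theorem stmt9_general {V : Type} {k : ℕ} (paths : Fin k → List (V × V))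
    (sIdx : Fin k)
    (𝒱 : Set (V × Fin k × Fin k)) (hSVS : IsStaticSVS paths sIdx 𝒱) :
    ∃ ℓ : Fin k → ℕ → ℤ,
      (∀ i n, n + 1 < (paths i).length → ℓ i n < ℓ i (n + 1)) ∧
      ∀ v a b, (v, a, b) ∈ 𝒱 →
        ∀ n e, (paths a)[n]? = some e → e.2 = v →
        ∀ m f, (paths b)[m]? = some f → f.1 = v → ℓ a n < ℓ b m := by
  let L := Finset.univ.sup fun i => (paths i).length
  let d := ancestorCount (svsEdgeS 𝒱)
  refine ⟨fun i n => ((L * d i + n : ℕ) : ℤ), fun i n _ => by simp, ?_⟩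
  intro v a b hv n e hn _ m f _ _
  have hnL : n < L :=
    (List.getElem?_eq_some_iff.mp hn).1.trans_le (Finset.le_sup (f := fun i => (paths i).length)
      (Finset.mem_univ a))
  have hd : d a < d b := ancestorCount_lt_of_rel ⟨v, hv⟩ (hSVS.not_transGen_self hv)
  exact Int.ofNat_lt.mpr (Nat.mul_add_lt_mul_add hnL hd)

/-- Given a collection of `k` static directed paths with a
vertex `s` on the distinguished path `paths sIdx`, and a set `𝒱` of switches
satisfying the label-free switch-vertex-set conditions (i)–(iv), there is a
labeling of the edges of the paths, strictly increasing along each path, that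
makes every switch of `𝒱` temporal: the (label of the) edge of `paths a`
entering the switch vertex is smaller than that of the edge of `paths b`
leaving it. -/
theorem stmt9 {V : Type} {k : ℕ} (paths : Fin k → List (V × V))
    (hpaths : ∀ i, (paths i).Chain' (fun e f => e.2 = f.1))
    (sIdx : Fin k) (s : V) (hs : s ∈ staticVerts (paths sIdx))
    (𝒱 : Set (V × Fin k × Fin k)) (hSVS : IsStaticSVS paths sIdx 𝒱) :
    ∃ ℓ : Fin k → ℕ → ℤ,
      (∀ i n, n + 1 < (paths i).length → ℓ i n < ℓ i (n + 1)) ∧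
      ∀ v a b, (v, a, b) ∈ 𝒱 →
        ∀ n e, (paths a)[n]? = some e → e.2 = v →
        ∀ m f, (paths b)[m]? = some f → f.1 = v → ℓ a n < ℓ b m :=
  stmt9_general paths sIdx 𝒱 hSVS
end

section
/- Let P be a temporal path with temporal edges (e_1, t_1), …, (e_m, t_m), let 1 ≤ j < i ≤ m and let δ < 0. After applying the shifting operation ((e_i, t_i), δ) to P, the label of e_j equals t_j − max(0, |δ| − σ), where σ = t_i − t_j − (i − j) is the cumulative slack between e_j and e_i on P; in particular, the label of e_j decreases by at most |δ|. -/
/-- Apply a shifting operation of amount `δ` to the edge at position `pos` of the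
base-path `p`: the edge itself is shifted by `δ`, and the shift propagates
forwards via `max` and backwards via `min`. -/
def shiftPath {V : Type} (p : List (TEdge V)) (pos : ℕ) (δ : ℤ) : List (TEdge V) :=
  match p[pos]? with
  | none => p
  | some e₀ =>
      p.mapIdx fun n e =>
        if n < pos then { e with lab := min e.lab (e₀.lab + δ - ((pos : ℤ) - (n : ℤ))) }
        else if n = pos then { e with lab := e₀.lab + δ }
        else { e with lab := max e.lab (e₀.lab + δ + ((n : ℤ) - (pos : ℤ))) }

/-- A shifting operation on a temporal `k`-path graph: it shifts the edge at
position `pos` of base-path `idx` by `δ` (a delay if `δ > 0`, an advance if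
`δ < 0`). -/
structure ShiftOp (k : ℕ) where
  idx : Fin k
  pos : ℕ
  δ : ℤ

/-- Apply a single shifting operation to a `k`-path graph. -/
def applyOp {V : Type} {k : ℕ} (P : Fin k → List (TEdge V)) (op : ShiftOp k) :
    Fin k → List (TEdge V) :=
  Function.update P op.idx (shiftPath (P op.idx) op.pos op.δ)

/-- Apply a sequence of shifting operations, in order. -/
def applyOps {V : Type} {k : ℕ} (P : Fin k → List (TEdge V)) (l : List (ShiftOp k)) :
    Fin k → List (TEdge V) :=
  l.foldl applyOp P

/-- The cost of a sequence of shifting operations: the sum of the absolute values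
of the individual shifts. -/
def opsCost {k : ℕ} (l : List (ShiftOp k)) : ℕ :=
  (l.map fun op => op.δ.natAbs).sum

/-! Labels along a temporal path rise by at least one per step, so `σ ≥ 0`; the backward
propagation sets the label of `e_j` to `min t_j (t_i + δ - (i - j))`, which is
`t_j - max 0 (|δ| - σ)` once `δ < 0`. -/

theorem IsTemporalPath.lab_add_le {V : Type} {p : List (TEdge V)} (hp : IsTemporalPath p)
    {i j : ℕ} (hji : j ≤ i) (hi : i < p.length) :
    p[j].lab + ((i : ℤ) - (j : ℤ)) ≤ p[i].lab := by
  induction i, hji using Nat.le_induction with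
  | base => simp
  | succ n hjn ih =>
    have hstep : p[n].lab < p[n + 1].lab := (List.isChain_iff_getElem.mp hp n hi).2
    have := ih (by omega)
    push_cast
    omega

theorem IsTemporalPath.lab_add_le_of_getElem? {V : Type} {p : List (TEdge V)}
    (hp : IsTemporalPath p) {i j : ℕ} (hji : j ≤ i) {ei ej : TEdge V}
    (hei : p[i]? = some ei) (hej : p[j]? = some ej) :
    ej.lab + ((i : ℤ) - (j : ℤ)) ≤ ei.lab := by
  obtain ⟨hi, rfl⟩ := List.getElem?_eq_some_iff.mp hei
  obtain ⟨hj, rfl⟩ := List.getElem?_eq_some_iff.mp hej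
  exact hp.lab_add_le hji hi

theorem shiftPath_getElem?_of_lt {V : Type} {p : List (TEdge V)} {i j : ℕ} (hji : j < i)
    (δ : ℤ) {ei : TEdge V} (hei : p[i]? = some ei) :
    (shiftPath p i δ)[j]? =
      p[j]?.map fun e => { e with lab := min e.lab (ei.lab + δ - ((i : ℤ) - (j : ℤ))) } := by
  simp only [shiftPath, hei, List.getElem?_mapIdx, if_pos hji]

/-- Advancing the edge at position `i` of a temporal path `p`
by `δ < 0` changes the label of the edge at an earlier position `j` to
`t_j - max 0 (|δ| - σ)`, where `σ = t_i - t_j - (i - j)` is the cumulative slack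
between the two edges; in particular the label of `e_j` decreases by at most
`|δ|`. -/
theorem stmt11 {V : Type} (p : List (TEdge V)) (hp : IsTemporalPath p)
    (i j : ℕ) (hji : j < i) (δ : ℤ) (hδ : δ < 0)
    (ei ej : TEdge V) (hei : p[i]? = some ei) (hej : p[j]? = some ej) :
    (shiftPath p i δ)[j]? =
      some { ej with
        lab := ej.lab - max 0 (|δ| - (ei.lab - ej.lab - ((i : ℤ) - (j : ℤ)))) } ∧
    max 0 (|δ| - (ei.lab - ej.lab - ((i : ℤ) - (j : ℤ)))) ≤ |δ| := by
  have hslack : ej.lab + ((i : ℤ) - (j : ℤ)) ≤ ei.lab := hp.lab_add_le_of_getElem? hji.le hei hej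
  have habs : |δ| = -δ := abs_of_neg hδ
  refine ⟨?_, by omega⟩
  rw [shiftPath_getElem?_of_lt hji δ hei, hej, Option.map_some]
  congr 2
  omega
end

section
/- Let P be a temporal path, i.e., its labels t_1 < t_2 < … < t_m are strictly increasing along P. After applying any single shifting operation ((e_i, t_i), δ) with δ ∈ ℤ to P, the resulting labels along P are again strictly increasing; consequently, applying any sequence of shifting operations to a temporal k-path graph yields again a temporal k-path graph. -/
/-! A shift only relabels edges, and the new label of the `n`-th edge is its old label clamped
against `t + (n - pos)`, where `t` is the new label of the shifted edge. Both the old labels and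
these bounds increase strictly along the path, and clamping by `min`/`max` preserves this. -/

def shiftLabel (pos : ℕ) (t : ℤ) (n : ℕ) (l : ℤ) : ℤ :=
  if n < pos then min l (t - (pos - n)) else if n = pos then t else max l (t + (n - pos))

theorem shiftLabel_lt_succ (pos : ℕ) (t : ℤ) (n : ℕ) (l l' : ℤ) (h : l < l') :
    shiftLabel pos t n l < shiftLabel pos t (n + 1) l' := by
  unfold shiftLabel
  split_ifs <;> omega

theorem shiftPath_eq_mapIdx_shiftLabel {V : Type} {p : List (TEdge V)} {pos : ℕ} {e₀ : TEdge V}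
    (h : p[pos]? = some e₀) (δ : ℤ) :
    shiftPath p pos δ = p.mapIdx fun n e => { e with lab := shiftLabel pos (e₀.lab + δ) n e.lab } := by
  simp only [shiftPath, h]
  congr 1
  funext n e
  unfold shiftLabel
  split_ifs <;> rfl

theorem IsTemporalPath.mapIdx_relabel {V : Type} {p : List (TEdge V)} (hp : IsTemporalPath p)
    (g : ℕ → ℤ → ℤ) (hg : ∀ n l l', l < l' → g n l < g (n + 1) l') :
    IsTemporalPath (p.mapIdx fun n e => { e with lab := g n e.lab }) := by
  rw [IsTemporalPath, List.Chain', List.isChain_iff_getElem] at hp ⊢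
  intro i hi
  rw [List.length_mapIdx] at hi
  obtain ⟨hdst, hlab⟩ := hp i hi
  simp only [List.getElem_mapIdx]
  exact ⟨hdst, hg i _ _ hlab⟩

theorem IsTemporalPath.shiftPath {V : Type} {p : List (TEdge V)} (hp : IsTemporalPath p)
    (pos : ℕ) (δ : ℤ) : IsTemporalPath (shiftPath p pos δ) := by
  cases h : p[pos]? with
  | none => rwa [_root_.shiftPath, h]
  | some e₀ =>
    rw [shiftPath_eq_mapIdx_shiftLabel h]
    exact hp.mapIdx_relabel _ (shiftLabel_lt_succ pos _)

theorem applyOp_isTemporalPath {V : Type} {k : ℕ} {P : Fin k → List (TEdge V)}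
    (hP : ∀ i, IsTemporalPath (P i)) (op : ShiftOp k) (i : Fin k) :
    IsTemporalPath (applyOp P op i) := by
  rcases eq_or_ne i op.idx with rfl | hne
  · rw [applyOp, Function.update_self]
    exact (hP _).shiftPath _ _
  · rw [applyOp, Function.update_of_ne hne]
    exact hP i

theorem applyOps_isTemporalPath {V : Type} {k : ℕ} {P : Fin k → List (TEdge V)}
    (hP : ∀ i, IsTemporalPath (P i)) (S : List (ShiftOp k)) (i : Fin k) :
    IsTemporalPath (applyOps P S i) := by
  induction S generalizing P with
  | nil => exact hP i
  | cons op S ih => exact ih (applyOp_isTemporalPath hP op)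

/-- Applying a single shifting operation to a temporal path
yields again a temporal path (strictly increasing labels); consequently,
applying any sequence of shifting operations to a temporal `k`-path graph yields
again a temporal `k`-path graph. -/
theorem stmt12 {V : Type} {k : ℕ} (p : List (TEdge V)) (hp : IsTemporalPath p)
    (pos : ℕ) (δ : ℤ)
    (P : Fin k → List (TEdge V)) (hP : ∀ i, IsTemporalPath (P i))
    (S : List (ShiftOp k)) :
    IsTemporalPath (shiftPath p pos δ) ∧
    ∀ i : Fin k, IsTemporalPath (applyOps P S i) :=
  ⟨hp.shiftPath pos δ, applyOps_isTemporalPath hP S⟩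
end

section
/- Let P and Q be temporal paths in a temporal graph, and let x and y be vertices lying on both P and Q such that P has edges e_P^−(x), e_P^−(y) entering x and y respectively, and Q has edges e_Q^+(x), e_Q^+(y) leaving x and y respectively. If λ(e_Q^+(x)) − λ(e_P^−(x)) = λ(e_Q^+(y)) − λ(e_P^−(y)), then x occurs at or before y on P if and only if x occurs at or before y on Q. -/
namespace IsTemporalPath

variable {V : Type} {p : List (TEdge V)}

theorem pairwise_lab_lt_s13 (hp : IsTemporalPath p) : p.Pairwise fun e f => e.lab < f.lab :=
  List.pairwise_map.mp <|
    List.isChain_iff_pairwise.mp (List.isChain_map _ |>.mpr (hp.imp fun _ _ h => h.2))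

theorem lab_lt_of_lt (hp : IsTemporalPath p) {i j : ℕ} {e f : TEdge V}
    (he : p[i]? = some e) (hf : p[j]? = some f) (hij : i < j) : e.lab < f.lab := by
  obtain ⟨hi, rfl⟩ := List.getElem?_eq_some_iff.mp he
  obtain ⟨hj, rfl⟩ := List.getElem?_eq_some_iff.mp hf
  exact List.pairwise_iff_getElem.mp hp.pairwise_lab_lt_s13 i j hi hj hij

theorem le_iff_lab_le (hp : IsTemporalPath p) {i j : ℕ} {e f : TEdge V}
    (he : p[i]? = some e) (hf : p[j]? = some f) : i ≤ j ↔ e.lab ≤ f.lab := by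
  constructor
  · intro hij
    rcases hij.lt_or_eq with hlt | rfl
    · exact (hp.lab_lt_of_lt he hf hlt).le
    · cases he.symm.trans hf
      rfl
  · intro hlab
    by_contra! hji
    exact (hp.lab_lt_of_lt hf he hji).not_ge hlab

end IsTemporalPath

theorem stmt13_general {V : Type} (P Q : List (TEdge V))
    (hP : IsTemporalPath P) (hQ : IsTemporalPath Q)
    (mx my nx ny : ℕ) (ex ey fx fy : TEdge V)
    (hex : P[mx]? = some ex) (hey : P[my]? = some ey)
    (hfx : Q[nx]? = some fx) (hfy : Q[ny]? = some fy)
    (hlab : fx.lab - ex.lab = fy.lab - ey.lab) :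
    mx ≤ my ↔ nx ≤ ny :=
  calc mx ≤ my ↔ ex.lab ≤ ey.lab := hP.le_iff_lab_le hex hey
    _ ↔ fx.lab ≤ fy.lab := by omega
    _ ↔ nx ≤ ny := (hQ.le_iff_lab_le hfx hfy).symm

/-- Let `P` and `Q` be temporal paths, `x`, `y` vertices lying
on both, with `ex`, `ey` the edges of `P` entering `x`, `y` (at positions `mx`,
`my`) and `fx`, `fy` the edges of `Q` leaving `x`, `y` (at positions `nx`, `ny`).
If the label differences agree, `λ(fx) - λ(ex) = λ(fy) - λ(ey)`, then `x` occurs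
at or before `y` on `P` iff `x` occurs at or before `y` on `Q`. -/
theorem stmt13 {V : Type} (P Q : List (TEdge V))
    (hP : IsTemporalPath P) (hQ : IsTemporalPath Q)
    (x y : V) (mx my nx ny : ℕ) (ex ey fx fy : TEdge V)
    (hex : P[mx]? = some ex) (hey : P[my]? = some ey)
    (hfx : Q[nx]? = some fx) (hfy : Q[ny]? = some fy)
    (hexd : ex.dst = x) (heyd : ey.dst = y)
    (hfxs : fx.src = x) (hfys : fy.src = y)
    (hlab : fx.lab - ex.lab = fy.lab - ey.lab) :
    mx ≤ my ↔ nx ≤ ny :=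
  stmt13_general P Q hP hQ mx my nx ny ex ey fx fy hex hey hfx hfy hlab
end

section
/- Let 𝒫 be a collection of k static directed paths with a vertex s on a distinguished path P_s. The maximum, over all labelings λ strictly increasing along each path, of the number of vertices reachable from s in the temporal k-path graph (⊎𝒫, λ), equals the maximum, over all sets 𝒱 of switches satisfying the label-free switch-vertex-set conditions (i)–(iv), of the number of vertices in P_s[s:] ∪ ⋃_{P : 𝒱 contains a switch onto P} P[switchonto(P):]. -/
/-!
Given a labeling, call an edge usable if some temporal walk from `s` can take it. Every path
`b ≠ P_s` carrying a usable edge is entered at its first usable edge, and the last edge of a walk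
reaching it lies on a path feeding `b`; choosing one feeder per path gives switches satisfying
(i)–(iv). The label of the first usable edge strictly decreases towards the feeder, so the feeder
graph is a tree rooted at `P_s`, and every reachable vertex follows the entry vertex of the path
of the last edge that reaches it.

Conversely, rank the paths by their depth `d` in `T_𝒱` and label the `n`-th edge of path `i` by
`N * d i + n` with `N` larger than all path lengths. By induction on the depth, every switch
vertex onto `P` is reached before the labels of `P` begin, so all of `P_s[s:]` and of every
`P[switchonto(P):]` is reachable. Hence each value in either supremum is bounded by one in the
other.
-/

lemma le_of_forall_lt_succ_of_lt {β : Type*} [Preorder β] {f : ℕ → β} {L : ℕ}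
    (hf : ∀ n, n + 1 < L → f n < f (n + 1)) {m n : ℕ} (hmn : m ≤ n) (hn : n < L) :
    f m ≤ f n := by
  induction n, hmn using Nat.le_induction with
  | base => exact le_rfl
  | succ n _ ih => exact (ih (by omega)).trans (hf n hn).le

section Rank
variable {α : Type*} (r : α → α → Prop) (x : α)

def StepsFrom : ℕ → α → Prop
  | 0, b => b = x
  | n + 1, b => ∃ a, StepsFrom n a ∧ r a b

variable {r x}

lemma exists_stepsFrom_of_reflTransGen {b : α} (h : Relation.ReflTransGen r x b) :
    ∃ n, StepsFrom r x n b := by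
  induction h with
  | refl => exact ⟨0, rfl⟩
  | tail _ hbc ih =>
    obtain ⟨n, hn⟩ := ih
    exact ⟨n + 1, _, hn, hbc⟩

/-- The distance from the root is a rank function for `r`. -/
lemma exists_rank_of_unique_pred (hunique : ∀ ⦃a a' b⦄, r a b → r a' b → a = a')
    (hroot : ∀ a, ¬ r a x) (hreach : ∀ ⦃a b⦄, r a b → Relation.ReflTransGen r x a) :
    ∃ d : α → ℕ, ∀ ⦃a b⦄, r a b → d a < d b := by
  refine ⟨fun b => sInf {n | StepsFrom r x n b}, fun a b hab => ?_⟩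
  dsimp only
  have hb : StepsFrom r x (sInf {n | StepsFrom r x n b}) b :=
    Nat.sInf_mem (exists_stepsFrom_of_reflTransGen ((hreach hab).tail hab))
  rcases h : sInf {n | StepsFrom r x n b} with _ | n <;> rw [h] at hb
  · exact (hroot a (hb ▸ hab)).elim
  · obtain ⟨c, hc, hcb⟩ := hb
    rw [hunique hab hcb]
    exact Nat.lt_succ_of_le (Nat.sInf_le hc)

lemma reflTransGen_of_exists_pred_lt {α β : Type*} [Finite α] [Preorder β] {r : α → α → Prop}
    {x : α} {E : Set α} (key : α → β)
    (h : ∀ b ∈ E, b ≠ x → ∃ a ∈ E, key a < key b ∧ r a b) :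
    ∀ b ∈ E, Relation.ReflTransGen r x b := by
  intro b
  induction b using (Finite.wellFounded_of_trans_of_irrefl (InvImage (· < ·) key)).induction with
  | h b ih =>
    intro hb
    by_cases hbx : b = x
    · exact hbx ▸ .refl
    · obtain ⟨a, ha, hlt, hab⟩ := h b hb hbx
      exact (ih a hlt ha).tail hab

end Rank

section StaticPaths
variable {V : Type} {p : List (V × V)}

lemma length_staticVerts_le (p : List (V × V)) : (staticVerts p).length ≤ p.length + 1 := by
  cases h : p.getLast? <;> simp [staticVerts, h]

lemma le_length_of_staticVerts_getElem?_eq_some {n : ℕ} {v : V}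
    (h : (staticVerts p)[n]? = some v) : n ≤ p.length :=
  Nat.le_of_lt_succ ((List.getElem?_eq_some_iff.1 h).1.trans_le (length_staticVerts_le p))

lemma staticVerts_getElem?_of_lt {n : ℕ} (h : n < p.length) :
    (staticVerts p)[n]? = some p[n].1 := by
  rw [staticVerts, List.getElem?_append_left (by simpa using h)]
  simp [h]

lemma staticVerts_getElem?_succ (hp : p.IsChain (fun e f => e.2 = f.1)) {n : ℕ}
    (h : n < p.length) : (staticVerts p)[n + 1]? = some p[n].2 := by
  rcases Nat.lt_or_ge (n + 1) p.length with h' | h'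
  · rw [staticVerts_getElem?_of_lt h', List.isChain_iff_getElem.1 hp n h']
  · obtain rfl : n = p.length - 1 := by omega
    simp [staticVerts, List.getLast?_eq_getElem?, h, Nat.sub_add_cancel (Nat.one_le_of_lt h)]

lemma mem_mkTemporal_iff (hp : p.IsChain (fun e f => e.2 = f.1)) {f : ℕ → ℤ} {e : TEdge V} :
    e ∈ mkTemporal p f ↔ ∃ n < p.length, (staticVerts p)[n]? = some e.src ∧
      (staticVerts p)[n + 1]? = some e.dst ∧ e.lab = f n := by
  simp only [mkTemporal, List.mem_iff_getElem, List.getElem_mapIdx, List.length_mapIdx]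
  constructor
  · rintro ⟨n, hn, rfl⟩
    exact ⟨n, hn, staticVerts_getElem?_of_lt hn, staticVerts_getElem?_succ hp hn, rfl⟩
  · rintro ⟨n, hn, hsrc, hdst, hlab⟩
    rw [staticVerts_getElem?_of_lt hn, Option.some_inj] at hsrc
    rw [staticVerts_getElem?_succ hp hn, Option.some_inj] at hdst
    exact ⟨n, hn, by rw [hsrc, hdst, ← hlab]⟩

end StaticPaths

section TemporalReachability
variable {V : Type} {k : ℕ} (P : Fin k → List (TEdge V)) (u : V)

/-- `ReachesBefore P u v t`: some temporal walk from `u` in `⊎ P` arrives at `v` with last label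
`< t`; the empty walk arrives before every time. -/
inductive ReachesBefore : V → ℤ → Prop
  | refl (t : ℤ) : ReachesBefore u t
  | step {i : Fin k} {e : TEdge V} {t : ℤ} :
      ReachesBefore e.src e.lab → e ∈ P i → e.lab < t → ReachesBefore e.dst t

variable {P u}

lemma ReachesBefore.mono {v : V} {t t' : ℤ} (h : ReachesBefore P u v t) (htt' : t ≤ t') :
    ReachesBefore P u v t' := by
  cases h with
  | refl => exact .refl t'
  | step hsrc he hlt => exact .step hsrc he (hlt.trans_le htt')

lemma ReachesBefore.exists_walk {v : V} {t : ℤ} (h : ReachesBefore P u v t) :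
    u = v ∨ ∃ p : List (Fin k × TEdge V), p ≠ [] ∧ IsAWalk P p ∧
      (p.head?.map fun x => x.2.src) = some u ∧
      ∃ x ∈ p.getLast?, x.2.dst = v ∧ x.2.lab < t := by
  induction h with
  | refl => exact .inl rfl
  | @step i e t _ he hlt ih =>
    rcases ih with hu | ⟨p, hp, hwalk, hhead, x, hx, hxe, hxlab⟩
    · exact .inr ⟨[(i, e)], List.cons_ne_nil _ _, ⟨by simpa using he, List.isChain_singleton _⟩,
        by simp [hu], _, rfl, rfl, hlt⟩
    · refine .inr ⟨p ++ [(i, e)], by simp, ⟨?_, ?_⟩, ?_, (i, e), by simp, rfl, hlt⟩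
      · intro y hy
        rcases List.mem_append.1 hy with hy | hy
        · exact hwalk.1 y hy
        · rwa [List.mem_singleton.1 hy]
      · refine List.isChain_append.2 ⟨hwalk.2, List.isChain_singleton _, fun y hy z hz => ?_⟩
        obtain rfl : y = x := Option.mem_unique hy hx
        obtain rfl : z = (i, e) := by simpa using hz.symm
        exact ⟨hxe, hxlab⟩
      · rwa [List.head?_append_of_ne_nil _ hp]

lemma ReachesBefore.reaches {v : V} {t : ℤ} (h : ReachesBefore P u v t) : Reaches P u v := by
  rcases h.exists_walk with hu | ⟨p, hp, hwalk, hhead, x, hx, hxv, -⟩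
  · exact .inl hu
  · exact .inr ⟨p, hp, hwalk, hhead, by simp [Option.mem_def.1 hx, hxv]⟩

lemma reachesBefore_of_isAWalk {p : List (Fin k × TEdge V)} (hwalk : IsAWalk P p)
    (hhead : (p.head?.map fun x => x.2.src) = some u) :
    ∀ x ∈ p.getLast?, ReachesBefore P u x.2.dst (x.2.lab + 1) := by
  induction p using List.reverseRecOn with
  | nil => simp
  | append_singleton p y ih =>
    intro x hx
    obtain rfl : x = y := by simpa using hx.symm
    have hwalk' : IsAWalk P p :=
      ⟨fun w hw => hwalk.1 w (List.mem_append_left _ hw), (List.isChain_append.1 hwalk.2).1⟩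
    refine .step ?_ (hwalk.1 x (by simp)) (lt_add_one _)
    cases hz : p.getLast? with
    | none =>
      obtain rfl : p = [] := List.getLast?_eq_none_iff.1 hz
      rw [show x.2.src = u by simpa using hhead]
      exact .refl _
    | some z =>
      have hp : p ≠ [] := by rintro rfl; simp at hz
      have hstep : TemporalStep z.2 x.2 :=
        (List.isChain_append.1 hwalk.2).2.2 z hz x rfl
      rw [← hstep.1]
      refine (ih hwalk' ?_ z hz).mono (by linarith [hstep.2])
      rwa [List.head?_append_of_ne_nil _ hp] at hhead

lemma Reaches.exists_reachesBefore {v : V} (h : Reaches P u v) : ∃ t, ReachesBefore P u v t := by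
  rcases h with rfl | ⟨p, -, hwalk, hhead, hlast⟩
  · exact ⟨0, .refl 0⟩
  · obtain ⟨x, hx, rfl⟩ := Option.map_eq_some_iff.1 hlast
    exact ⟨_, reachesBefore_of_isAWalk hwalk hhead x hx⟩

end TemporalReachability

section KPathGraph
variable {V : Type} {k : ℕ}

def temporalGraph (paths : Fin k → List (V × V)) (ℓ : Fin k → ℕ → ℤ) :
    Fin k → List (TEdge V) :=
  fun i => mkTemporal (paths i) (ℓ i)

def reachSet (paths : Fin k → List (V × V)) (ℓ : Fin k → ℕ → ℤ) (s : V) : Set V :=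
  {w | Reaches (temporalGraph paths ℓ) s w}

def switchCover (paths : Fin k → List (V × V)) (sIdx : Fin k) (s : V)
    (𝒱 : Set (V × Fin k × Fin k)) : Set V :=
  {w | le_onStatic (paths sIdx) s w} ∪ {w | ∃ v a b, (v, a, b) ∈ 𝒱 ∧ le_onStatic (paths b) v w}

lemma switchCover_finite (paths : Fin k → List (V × V)) (sIdx : Fin k) (s : V)
    (𝒱 : Set (V × Fin k × Fin k)) : (switchCover paths sIdx s 𝒱).Finite := by
  refine (Set.finite_iUnion fun i => (staticVerts (paths i)).finite_toSet).subset ?_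
  rintro w (⟨-, n, -, -, hn⟩ | ⟨-, -, b, -, -, n, -, -, hn⟩) <;>
    exact Set.mem_iUnion.2 ⟨_, List.mem_of_getElem? hn⟩

variable {paths : Fin k → List (V × V)} {ℓ : Fin k → ℕ → ℤ} {s : V}

lemma ReachesBefore.along {i : Fin k} (hp : (paths i).IsChain (fun e f => e.2 = f.1))
    (hℓ : StrictMono (ℓ i)) {m n : ℕ} (hmn : m ≤ n) {x y : V}
    (hx : (staticVerts (paths i))[m]? = some x) (hy : (staticVerts (paths i))[n]? = some y)
    (h : ReachesBefore (temporalGraph paths ℓ) s x (ℓ i m)) :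
    ReachesBefore (temporalGraph paths ℓ) s y (ℓ i n) := by
  induction n, hmn using Nat.le_induction generalizing y with
  | base => rwa [← Option.some_inj.1 (hx.symm.trans hy)]
  | succ n hmn ih =>
    have hn : n < (paths i).length := le_length_of_staticVerts_getElem?_eq_some hy
    have he : (⟨(paths i)[n].1, y, ℓ i n⟩ : TEdge V) ∈ temporalGraph paths ℓ i :=
      (mem_mkTemporal_iff hp).2 ⟨n, hn, staticVerts_getElem?_of_lt hn, hy, rfl⟩
    exact .step (ih (staticVerts_getElem?_of_lt hn)) he (hℓ n.lt_succ_self)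

end KPathGraph

section LabelingOfSwitches
variable {V : Type} {k : ℕ} {paths : Fin k → List (V × V)} {sIdx : Fin k} {s : V}
  {𝒱 : Set (V × Fin k × Fin k)}

/-- When `N` exceeds every path length, all labels of a path precede those of every path of
larger rank `d`. -/
def rankLabeling (N : ℕ) (d : Fin k → ℕ) : Fin k → ℕ → ℤ := fun i n => N * d i + n

lemma rankLabeling_strictMono (N : ℕ) (d : Fin k → ℕ) (i : Fin k) :
    StrictMono (rankLabeling N d i) := fun m n h => by
  simpa [rankLabeling] using h

variable {d : Fin k → ℕ} {N : ℕ}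

lemma reachesBefore_rankLabeling_of_mem_switches
    (hpaths : ∀ i, (paths i).IsChain (fun e f => e.2 = f.1))
    (hfirst : (staticVerts (paths sIdx)).head? = some s) (h𝒱 : IsStaticSVS paths sIdx 𝒱)
    (hd : ∀ ⦃v a b⦄, (v, a, b) ∈ 𝒱 → d a < d b) (hN : ∀ i, (paths i).length < N)
    {v : V} {a b : Fin k} (hvab : (v, a, b) ∈ 𝒱) :
    ReachesBefore (temporalGraph paths (rankLabeling N d)) s v (N * d b) := by
  induction hb : d b using Nat.strong_induction_on generalizing v a b with
  | _ n ih =>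
    subst hb
    obtain ⟨m, hm, hreach⟩ : ∃ m, (staticVerts (paths a))[m]? = some v ∧
        ReachesBefore (temporalGraph paths (rankLabeling N d)) s v (rankLabeling N d a m) := by
      rcases (h𝒱.tree hvab).cases_tail with rfl | ⟨c, -, v', hv'⟩
      · obtain ⟨⟨e, he, rfl⟩, -⟩ := h𝒱.switch_exists hvab
        obtain ⟨q, hq, rfl⟩ := List.mem_iff_getElem.1 he
        have hs : (staticVerts (paths a))[0]? = some s := by rwa [List.head?_eq_getElem?] at hfirst
        have hv := staticVerts_getElem?_succ (hpaths a) hq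
        exact ⟨q + 1, hv, (ReachesBefore.refl _).along (hpaths a) (rankLabeling_strictMono N d a)
          (Nat.zero_le _) hs hv⟩
      · obtain ⟨m', m, hlt, hm', hm⟩ := h𝒱.onto_before_off hv' hvab
        refine ⟨m, hm, ((ih _ (hd hvab) hv' rfl).mono ?_).along (hpaths a)
          (rankLabeling_strictMono N d a) hlt.le hm' hm⟩
        simp [rankLabeling]
    refine hreach.mono ?_
    have hlt : N * d a + m < N * d b :=
      calc N * d a + m < N * (d a + 1) := by
            linarith [le_length_of_staticVerts_getElem?_eq_some hm, hN a]
        _ ≤ N * d b := Nat.mul_le_mul_left N (hd hvab)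
    simp only [rankLabeling]
    exact_mod_cast hlt.le

lemma switchCover_subset_reachSet_rankLabeling
    (hpaths : ∀ i, (paths i).IsChain (fun e f => e.2 = f.1))
    (hfirst : (staticVerts (paths sIdx)).head? = some s) (h𝒱 : IsStaticSVS paths sIdx 𝒱)
    (hd : ∀ ⦃v a b⦄, (v, a, b) ∈ 𝒱 → d a < d b) (hN : ∀ i, (paths i).length < N) :
    switchCover paths sIdx s 𝒱 ⊆ reachSet paths (rankLabeling N d) s := by
  rintro w (⟨m, n, hmn, hm, hn⟩ | ⟨v, a, b, hvab, m, n, hmn, hm, hn⟩)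
  · exact ((ReachesBefore.refl _).along (hpaths sIdx) (rankLabeling_strictMono N d sIdx)
      hmn hm hn).reaches
  · have hv := reachesBefore_rankLabeling_of_mem_switches hpaths hfirst h𝒱 hd hN hvab
    exact ((hv.mono (by simp [rankLabeling])).along (hpaths b) (rankLabeling_strictMono N d b)
      hmn hm hn).reaches

lemma exists_labeling_switchCover_subset_reachSet
    (hpaths : ∀ i, (paths i).IsChain (fun e f => e.2 = f.1))
    (hfirst : (staticVerts (paths sIdx)).head? = some s) (h𝒱 : IsStaticSVS paths sIdx 𝒱) :
    ∃ ℓ : Fin k → ℕ → ℤ, (∀ i n, n + 1 < (paths i).length → ℓ i n < ℓ i (n + 1)) ∧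
      switchCover paths sIdx s 𝒱 ⊆ reachSet paths ℓ s := by
  obtain ⟨d, hd⟩ := exists_rank_of_unique_pred (r := svsEdgeS 𝒱) (x := sIdx)
    (fun _ _ _ ⟨_, h⟩ ⟨_, h'⟩ => (h𝒱.unique_onto h h').2) (fun _ ⟨_, h⟩ => h𝒱.no_onto_source h)
    (fun _ _ ⟨_, h⟩ => h𝒱.tree h)
  have hN : ∀ i, (paths i).length < ∑ j, (paths j).length + 1 := fun i =>
    Nat.lt_succ_of_le (Finset.single_le_sum (f := fun j => (paths j).length)
      (fun j _ => Nat.zero_le _) (Finset.mem_univ i))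
  exact ⟨rankLabeling _ d, fun i n _ => rankLabeling_strictMono _ d i (lt_add_one n),
    switchCover_subset_reachSet_rankLabeling hpaths hfirst h𝒱 (fun v a b h => hd ⟨v, h⟩) hN⟩

end LabelingOfSwitches

section SwitchesOfLabeling
variable {V : Type} {k : ℕ} (paths : Fin k → List (V × V)) (ℓ : Fin k → ℕ → ℤ) (s : V)

def IsUsable (i : Fin k) (n : ℕ) : Prop :=
  n < (paths i).length ∧ ∃ v, (staticVerts (paths i))[n]? = some v ∧
    ReachesBefore (temporalGraph paths ℓ) s v (ℓ i n)

noncomputable def firstUsable (i : Fin k) : ℕ := sInf {n | IsUsable paths ℓ s i n}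

def Feeds (a : Fin k) (m : ℕ) (b : Fin k) : Prop :=
  IsUsable paths ℓ s a m ∧
    (staticVerts (paths a))[m + 1]? = (staticVerts (paths b))[firstUsable paths ℓ s b]? ∧
    ℓ a m < ℓ b (firstUsable paths ℓ s b)

noncomputable def feeder (b : Fin k) : Fin k :=
  @Classical.epsilon _ ⟨b⟩ fun a => ∃ m, Feeds paths ℓ s a m b

def switchesOf (sIdx : Fin k) : Set (V × Fin k × Fin k) :=
  {(v, a, b) : V × Fin k × Fin k | b ≠ sIdx ∧ (∃ n, IsUsable paths ℓ s b n) ∧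
    (staticVerts (paths b))[firstUsable paths ℓ s b]? = some v ∧ a = feeder paths ℓ s b}

variable {paths ℓ s} {sIdx : Fin k}

lemma isUsable_firstUsable {i : Fin k} {n : ℕ} (h : IsUsable paths ℓ s i n) :
    IsUsable paths ℓ s i (firstUsable paths ℓ s i) :=
  Nat.sInf_mem (s := {n | IsUsable paths ℓ s i n}) ⟨n, h⟩

lemma firstUsable_le {i : Fin k} {n : ℕ} (h : IsUsable paths ℓ s i n) :
    firstUsable paths ℓ s i ≤ n :=
  Nat.sInf_le h

lemma exists_isUsable_of_mem (hpaths : ∀ i, (paths i).IsChain (fun e f => e.2 = f.1))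
    {i : Fin k} {e : TEdge V} (he : e ∈ temporalGraph paths ℓ i)
    (h : ReachesBefore (temporalGraph paths ℓ) s e.src e.lab) :
    ∃ n, IsUsable paths ℓ s i n ∧ (staticVerts (paths i))[n + 1]? = some e.dst ∧ e.lab = ℓ i n := by
  obtain ⟨n, hn, hsrc, hdst, hlab⟩ := (mem_mkTemporal_iff (hpaths i)).1 he
  exact ⟨n, ⟨hn, e.src, hsrc, hlab ▸ h⟩, hdst, hlab⟩

/-- The walk from `s` to the entry vertex of `b` is nonempty because `s` lies on no path but
`P_s`; its last edge feeds `b`. -/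
lemma exists_feeds (hpaths : ∀ i, (paths i).IsChain (fun e f => e.2 = f.1))
    (honly : ∀ i, s ∈ staticVerts (paths i) → i = sIdx) {b : Fin k} (hb : b ≠ sIdx) {n : ℕ}
    (hn : IsUsable paths ℓ s b n) : ∃ a m, Feeds paths ℓ s a m b := by
  obtain ⟨-, v, hv, hreach⟩ := isUsable_firstUsable hn
  cases hreach with
  | refl => exact (hb (honly b (List.mem_of_getElem? hv))).elim
  | step hsrc he hlt =>
    obtain ⟨m, hm, hdst, hlab⟩ := exists_isUsable_of_mem hpaths he hsrc
    exact ⟨_, m, hm, hdst.trans hv.symm, hlab ▸ hlt⟩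

lemma feeds_feeder (hpaths : ∀ i, (paths i).IsChain (fun e f => e.2 = f.1))
    (honly : ∀ i, s ∈ staticVerts (paths i) → i = sIdx) {b : Fin k} (hb : b ≠ sIdx) {n : ℕ}
    (hn : IsUsable paths ℓ s b n) : ∃ m, Feeds paths ℓ s (feeder paths ℓ s b) m b :=
  Classical.epsilon_spec (exists_feeds hpaths honly hb hn)

/-- Along `feeder`, the label of the first usable edge strictly decreases. -/
lemma reflTransGen_switchesOf (hpaths : ∀ i, (paths i).IsChain (fun e f => e.2 = f.1))
    (honly : ∀ i, s ∈ staticVerts (paths i) → i = sIdx)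
    (hℓ : ∀ i n, n + 1 < (paths i).length → ℓ i n < ℓ i (n + 1)) {b : Fin k} {n : ℕ}
    (hn : IsUsable paths ℓ s b n) :
    Relation.ReflTransGen (svsEdgeS (switchesOf paths ℓ s sIdx)) sIdx b := by
  refine reflTransGen_of_exists_pred_lt (E := {b | ∃ n, IsUsable paths ℓ s b n})
    (fun b => ℓ b (firstUsable paths ℓ s b)) (fun b ⟨n, hn⟩ hb => ?_) b ⟨n, hn⟩
  obtain ⟨m, hm, -, hlt⟩ := feeds_feeder hpaths honly hb hn
  obtain ⟨-, v, hv, -⟩ := isUsable_firstUsable hn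
  refine ⟨_, ⟨m, hm⟩, lt_of_le_of_lt ?_ hlt, v, hb, ⟨n, hn⟩, hv, rfl⟩
  exact le_of_forall_lt_succ_of_lt (hℓ _) (firstUsable_le hm) hm.1

lemma isStaticSVS_switchesOf (hpaths : ∀ i, (paths i).IsChain (fun e f => e.2 = f.1))
    (honly : ∀ i, s ∈ staticVerts (paths i) → i = sIdx)
    (hℓ : ∀ i n, n + 1 < (paths i).length → ℓ i n < ℓ i (n + 1)) :
    IsStaticSVS paths sIdx (switchesOf paths ℓ s sIdx) where
  switch_exists := by
    rintro v a b ⟨hb, ⟨n, hn⟩, hv, rfl⟩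
    obtain ⟨m, ⟨hm, -⟩, hm1, -⟩ := feeds_feeder hpaths honly hb hn
    obtain ⟨hlt, -⟩ := isUsable_firstUsable hn
    exact ⟨⟨_, List.getElem_mem hm,
        Option.some_inj.1 ((staticVerts_getElem?_succ (hpaths _) hm).symm.trans (hm1.trans hv))⟩,
      ⟨_, List.getElem_mem hlt, Option.some_inj.1 ((staticVerts_getElem?_of_lt hlt).symm.trans hv)⟩⟩
  unique_onto := by
    rintro v v' a a' b ⟨-, -, hv, rfl⟩ ⟨-, -, hv', rfl⟩
    exact ⟨Option.some_inj.1 (hv.symm.trans hv'), rfl⟩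
  no_onto_source := by
    rintro v a ⟨hb, -⟩
    exact hb rfl
  onto_before_off := by
    rintro v a b ⟨-, -, hv, -⟩ v' c ⟨hc, ⟨n, hn⟩, hv', rfl⟩
    obtain ⟨m, hm, hm1, -⟩ := feeds_feeder hpaths honly hc hn
    exact ⟨_, m + 1, Nat.lt_succ_of_le (firstUsable_le hm), hv, hm1.trans hv'⟩
  tree := by
    rintro v a b ⟨hb, ⟨n, hn⟩, -, rfl⟩
    obtain ⟨m, hm, -⟩ := feeds_feeder hpaths honly hb hn
    exact reflTransGen_switchesOf hpaths honly hℓ hm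

lemma reachSet_subset_switchCover (hpaths : ∀ i, (paths i).IsChain (fun e f => e.2 = f.1))
    (hfirst : (staticVerts (paths sIdx)).head? = some s) :
    reachSet paths ℓ s ⊆ switchCover paths sIdx s (switchesOf paths ℓ s sIdx) := by
  intro w hw
  have hs : (staticVerts (paths sIdx))[0]? = some s := by rwa [List.head?_eq_getElem?] at hfirst
  obtain ⟨t, ht⟩ := Reaches.exists_reachesBefore hw
  cases ht with
  | refl => exact .inl ⟨0, 0, le_rfl, hs, hs⟩
  | @step i e _ hsrc he _ =>
    obtain ⟨n, hn, hdst, -⟩ := exists_isUsable_of_mem hpaths he hsrc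
    by_cases hi : i = sIdx
    · subst hi
      exact .inl ⟨0, n + 1, Nat.zero_le _, hs, hdst⟩
    · obtain ⟨-, v, hv, -⟩ := isUsable_firstUsable hn
      exact .inr ⟨v, _, i, ⟨hi, ⟨n, hn⟩, hv, rfl⟩, _, n + 1,
        (firstUsable_le hn).trans n.le_succ, hv, hdst⟩

lemma reachSet_finite (hpaths : ∀ i, (paths i).IsChain (fun e f => e.2 = f.1))
    (hfirst : (staticVerts (paths sIdx)).head? = some s) : (reachSet paths ℓ s).Finite :=
  (switchCover_finite paths sIdx s _).subset (reachSet_subset_switchCover hpaths hfirst)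

end SwitchesOfLabeling

theorem stmt14_general {V : Type} {k : ℕ} (paths : Fin k → List (V × V))
    (hpaths : ∀ i, (paths i).Chain' (fun e f => e.2 = f.1))
    (sIdx : Fin k) (s : V)
    (hfirst : (staticVerts (paths sIdx)).head? = some s)
    (honly : ∀ i, s ∈ staticVerts (paths i) → i = sIdx) :
    sSup {m : ℕ | ∃ ℓ : Fin k → ℕ → ℤ,
        (∀ i n, n + 1 < (paths i).length → ℓ i n < ℓ i (n + 1)) ∧
        m = {w | Reaches (fun i => mkTemporal (paths i) (ℓ i)) s w}.ncard} =
    sSup {m : ℕ | ∃ 𝒱 : Set (V × Fin k × Fin k), IsStaticSVS paths sIdx 𝒱 ∧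
        m = ({w | le_onStatic (paths sIdx) s w} ∪
          {w | ∃ v a b, (v, a, b) ∈ 𝒱 ∧ le_onStatic (paths b) v w}).ncard} := by
  apply csSup_eq_csSup_of_forall_exists_le
  · rintro _ ⟨ℓ, hℓ, rfl⟩
    exact ⟨_, ⟨_, isStaticSVS_switchesOf hpaths honly hℓ, rfl⟩,
      Set.ncard_le_ncard (reachSet_subset_switchCover hpaths hfirst) (switchCover_finite _ _ _ _)⟩
  · rintro _ ⟨𝒱, h𝒱, rfl⟩
    obtain ⟨ℓ, hℓ, hsub⟩ := exists_labeling_switchCover_subset_reachSet hpaths hfirst h𝒱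
    exact ⟨_, ⟨ℓ, hℓ, rfl⟩, Set.ncard_le_ncard hsub (reachSet_finite hpaths hfirst)⟩

/-- For a collection of `k` static directed paths with source
`s` being the first vertex of the distinguished path `paths sIdx` (and lying on
no other path), the maximum over all strictly increasing labelings of the number
of vertices reachable from `s` equals the maximum over all label-free
switch-vertex-sets `𝒱` of the number of vertices in the union of the suffix of
`paths sIdx` from `s` and the suffixes of the switched-onto paths from their
switch vertices. -/
theorem stmt14 {V : Type} [Fintype V] {k : ℕ} (paths : Fin k → List (V × V))
    (hpaths : ∀ i, (paths i).Chain' (fun e f => e.2 = f.1))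
    (sIdx : Fin k) (s : V)
    (hnd : ∀ i, (staticVerts (paths i)).Nodup)
    (hfirst : (staticVerts (paths sIdx)).head? = some s)
    (honly : ∀ i, s ∈ staticVerts (paths i) → i = sIdx) :
    sSup {m : ℕ | ∃ ℓ : Fin k → ℕ → ℤ,
        (∀ i n, n + 1 < (paths i).length → ℓ i n < ℓ i (n + 1)) ∧
        m = {w | Reaches (fun i => mkTemporal (paths i) (ℓ i)) s w}.ncard} =
    sSup {m : ℕ | ∃ 𝒱 : Set (V × Fin k × Fin k), IsStaticSVS paths sIdx 𝒱 ∧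
        m = ({w | le_onStatic (paths sIdx) s w} ∪
          {w | ∃ v a b, (v, a, b) ∈ 𝒱 ∧ le_onStatic (paths b) v w}).ncard} :=
  stmt14_general paths hpaths sIdx s hfirst honly
end
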